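/- arXiv:1108.3655 — 5 statements merged into one kernel-verified Lean document; each statement's English description precedes it below -/
import Mathlib

section
/- Let G1 be a connected spanning edge-subgraph of a connected plane-embedded graph G2, neither of which is 2-connected, and for a connected non-2-connected graph G let r(G) denote the minimum radius of a disk containing at least one interior vertex of each leaf block of G. Then r(G1) ≥ r(G2). -/
open SimpleGraph Sum

noncomputable section

/-- Number of connected components of a graph. -/
def numComponents {V : Type*} (G : SimpleGraph V) : ℕ :=
  Nat.card G.ConnectedComponent

/-- `v` is a cut-vertex of `G` if deleting it increases the number of components. -/
def IsCutVertex {V : Type*} (G : SimpleGraph V) (v : V) : Prop :=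
  numComponents G < numComponents (G.induce {w | w ≠ v})

/-- Strict 2-connectivity: at least 3 vertices and connected after deleting any vertex. -/
def StrictTwoConnected {V : Type*} (G : SimpleGraph V) : Prop :=
  3 ≤ Nat.card V ∧ ∀ v : V, (G.induce {w | w ≠ v}).Connected

/-- Conventional 2-connectivity: connected with no cut-vertex (so K1, K2 count). -/
def TwoConnConv {V : Type*} (G : SimpleGraph V) : Prop :=
  G.Connected ∧ ∀ v : V, ¬ IsCutVertex G v

/-- An edge is critical if its deletion destroys (strict) 2-connectivity. -/
def IsCriticalEdge {V : Type*} (G : SimpleGraph V) (e : Sym2 V) : Prop :=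
  e ∈ G.edgeSet ∧ ¬ StrictTwoConnected (G.deleteEdges {e})

/-- A block: a maximal 2-connected subgraph (conventionally, K1 and K2 are 2-connected). -/
def IsBlock {V : Type*} (G : SimpleGraph V) (H : G.Subgraph) : Prop :=
  TwoConnConv H.coe ∧ ∀ H' : G.Subgraph, H ≤ H' → TwoConnConv H'.coe → H' = H

/-- A leaf block: a block containing exactly one cut-vertex of `G`. -/
def IsLeafBlock {V : Type*} (G : SimpleGraph V) (H : G.Subgraph) : Prop :=
  IsBlock G H ∧ ∃! v : V, v ∈ H.verts ∧ IsCutVertex G v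

/-- An isolated component: a maximal connected subgraph. -/
def IsIsolatedComponent {V : Type*} (G : SimpleGraph V) (H : G.Subgraph) : Prop :=
  H.coe.Connected ∧ ∀ H' : G.Subgraph, H ≤ H' → H'.coe.Connected → H' = H

/-- Length of the longest edge of a plane-embedded graph. -/
def maxEdgeLen {W : Type*} (H : SimpleGraph W) (p : W → EuclideanSpace ℝ (Fin 2)) : ℝ :=
  sSup {d : ℝ | ∃ a b : W, H.Adj a b ∧ d = dist (p a) (p b)}

/-- Radius of the smallest disk meeting the interior of every leaf block of `G`. -/
def scsdRadius {V : Type*} (G : SimpleGraph V) (pos : V → EuclideanSpace ℝ (Fin 2)) : ℝ :=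
  sInf {r : ℝ | ∃ z : EuclideanSpace ℝ (Fin 2), ∀ H : G.Subgraph, IsLeafBlock G H →
    ∃ y ∈ H.verts, ¬ IsCutVertex G y ∧ dist z (pos y) ≤ r}

section helpers
variable {V : Type*} {G : SimpleGraph V}

lemma cc_mk_surj : Function.Surjective (G.connectedComponentMk) := by
  intro c; exact c.exists_rep

instance cc_finite [Finite V] : Finite G.ConnectedComponent :=
  Finite.of_surjective _ (cc_mk_surj (G := G))

lemma nc_le_one_iff [Finite V] : numComponents G ≤ 1 ↔ G.Preconnected := by
  constructor
  · intro h u v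
    have hs : Subsingleton G.ConnectedComponent := by
      rcases Nat.le_one_iff_eq_zero_or_eq_one.mp h with h0 | h1
      · rcases Nat.card_eq_zero.mp h0 with he | hi
        · exact he.instSubsingleton
        · exact absurd hi (not_infinite_iff_finite.mpr inferInstance)
      · exact (Nat.card_eq_one_iff_unique.mp h1).1
    exact ConnectedComponent.exact (Subsingleton.elim _ _)
  · intro h
    have hs : Subsingleton G.ConnectedComponent := by
      constructor
      intro a b
      induction a using ConnectedComponent.ind with
      | _ u =>
      induction b using ConnectedComponent.ind with
      | _ v => exact ConnectedComponent.sound (h u v)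
    cases isEmpty_or_nonempty G.ConnectedComponent with
    | inl he => simp [numComponents, Nat.card_of_isEmpty]
    | inr hn => exact le_of_eq (Nat.card_eq_one_iff_unique.mpr ⟨hs, hn⟩)

lemma nc_eq_one_of_connected [Finite V] (h : G.Connected) : numComponents G = 1 := by
  have h1 : numComponents G ≤ 1 := nc_le_one_iff.mpr h.preconnected
  have h2 : 1 ≤ numComponents G := by
    have : Nonempty G.ConnectedComponent := ⟨G.connectedComponentMk h.nonempty.some⟩
    exact Nat.one_le_iff_ne_zero.mpr (Nat.card_ne_zero.mpr ⟨this, inferInstance⟩)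
  omega

lemma nc_mono [Finite V] {G' : SimpleGraph V} (hle : G ≤ G') :
    numComponents G' ≤ numComponents G := by
  apply Nat.card_le_card_of_surjective
    (fun c => c.map (SimpleGraph.Hom.ofLE hle))
  intro c
  induction c using ConnectedComponent.ind with
  | _ v => exact ⟨G.connectedComponentMk v, rfl⟩

lemma two_le_nc_of_not_precon [Finite V] [Nonempty V] (h : ¬ G.Preconnected) :
    2 ≤ numComponents G := by
  have h1 : ¬ numComponents G ≤ 1 := fun hh => h (nc_le_one_iff.mp hh)
  omega

lemma not_precon_of_two_le [Finite V] (h : 2 ≤ numComponents G) : ¬ G.Preconnected := by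
  intro hp
  have := nc_le_one_iff.mpr hp
  omega


variable {V : Type*} {G : SimpleGraph V}

lemma reach_coe_of_walk {K : G.Subgraph} : ∀ {x y : V} (p : G.Walk x y)
    (hx : x ∈ K.verts) (hy : y ∈ K.verts),
    (∀ d ∈ p.darts, K.Adj d.toProd.1 d.toProd.2) → K.coe.Reachable ⟨x, hx⟩ ⟨y, hy⟩ := by
  intro x y p
  induction p with
  | nil => intro hx hy _; exact Reachable.refl _
  | @cons a b c hab q ih =>
    intro hx hy hd
    have hK : K.Adj a b := hd ⟨(a, b), hab⟩ (by simp [Walk.darts_cons])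
    have hb : b ∈ K.verts := K.edge_vert hK.symm
    have h1 : K.coe.Adj ⟨a, hx⟩ ⟨b, hb⟩ := hK
    exact h1.reachable.trans (ih hb hy (fun d hd' => hd d (by simp [Walk.darts_cons, hd'])))

lemma walk_of_reach_coe {K : G.Subgraph} {u v : ↥K.verts} (h : K.coe.Reachable u v) :
    ∃ q : G.Walk u.val v.val, (∀ b ∈ q.support, b ∈ K.verts) ∧
      ∀ d ∈ q.darts, K.Adj d.toProd.1 d.toProd.2 := by
  obtain ⟨p⟩ := h
  induction p with
  | nil => exact ⟨Walk.nil, by simp, by simp⟩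
  | @cons a b c hab q ih =>
    obtain ⟨q', hs, hd⟩ := ih
    have hK : K.Adj a.val b.val := hab
    refine ⟨Walk.cons (K.adj_sub hK) q', ?_, ?_⟩
    · intro x hx
      rcases (by simpa [Walk.support_cons] using hx : x = a.val ∨ x ∈ q'.support) with h | h
      · subst h; exact a.property
      · exact hs x h
    · intro d hd'
      rcases (by simpa [Walk.darts_cons] using hd' :
          d = ⟨(a.val, b.val), K.adj_sub hK⟩ ∨ d ∈ q'.darts) with h | h
      · subst h; exact hK
      · exact hd d h

lemma reach_induce_of_walk {s : Set V} : ∀ {x y : V} (p : G.Walk x y)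
    (hx : x ∈ s) (hy : y ∈ s), (∀ b ∈ p.support, b ∈ s) →
    (G.induce s).Reachable ⟨x, hx⟩ ⟨y, hy⟩ := by
  intro x y p
  induction p with
  | nil => intro hx hy _; exact Reachable.refl _
  | @cons a b c hab q ih =>
    intro hx hy hs
    have hb : b ∈ s := hs b (by simp [Walk.support_cons])
    have h1 : (G.induce s).Adj ⟨a, hx⟩ ⟨b, hb⟩ := hab
    exact h1.reachable.trans (ih hb hy (fun d hd' => hs d (by simp [Walk.support_cons]; right; exact hd')))

lemma walk_of_reach_induce {s : Set V} {u v : ↥s} (h : (G.induce s).Reachable u v) :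
    ∃ q : G.Walk u.val v.val, ∀ b ∈ q.support, b ∈ s := by
  obtain ⟨p⟩ := h
  induction p with
  | nil => exact ⟨Walk.nil, by simp⟩
  | @cons a b c hab q ih =>
    obtain ⟨q', hs⟩ := ih
    have hG : G.Adj a.val b.val := hab
    refine ⟨Walk.cons hG q', ?_⟩
    intro x hx
    rcases (by simpa [Walk.support_cons] using hx : x = a.val ∨ x ∈ q'.support) with h | h
    · subst h; exact a.property
    · exact hs x h


/-- Reachable by a walk avoiding vertex `c`. -/
def RA (G : SimpleGraph V) (c x y : V) : Prop := ∃ p : G.Walk x y, c ∉ p.support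

lemma RA.ne_left {c x y : V} (h : RA G c x y) : x ≠ c := by
  obtain ⟨p, hp⟩ := h
  intro he; subst he; exact hp p.start_mem_support

lemma RA.ne_right {c x y : V} (h : RA G c x y) : y ≠ c := by
  obtain ⟨p, hp⟩ := h
  intro he; subst he; exact hp p.end_mem_support

lemma RA.refl {c x : V} (hx : x ≠ c) : RA G c x x :=
  ⟨Walk.nil, by simpa using fun h => hx h.symm⟩

lemma RA.symm {c x y : V} (h : RA G c x y) : RA G c y x := by
  obtain ⟨p, hp⟩ := h
  exact ⟨p.reverse, by simpa [Walk.support_reverse] using hp⟩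

lemma RA.trans {c x y z : V} (h : RA G c x y) (h' : RA G c y z) : RA G c x z := by
  obtain ⟨p, hp⟩ := h; obtain ⟨q, hq⟩ := h'
  refine ⟨p.append q, ?_⟩
  rw [Walk.mem_support_append_iff]
  rintro (hh | hh) <;> [exact hp hh; exact hq hh]

lemma RA.step {c x y z : V} (h : RA G c x y) (ha : G.Adj y z) (hz : z ≠ c) : RA G c x z :=
  h.trans ⟨ha.toWalk, by
    simp [Walk.support_cons]
    exact ⟨fun hh => h.ne_right hh.symm, fun hh => hz hh.symm⟩⟩

lemma ra_iff {c x y : V} (hx : x ≠ c) (hy : y ≠ c) :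
    RA G c x y ↔ (G.induce {w | w ≠ c}).Reachable ⟨x, hx⟩ ⟨y, hy⟩ := by
  constructor
  · rintro ⟨p, hp⟩
    exact reach_induce_of_walk p hx hy (fun b hb => fun he => hp (he ▸ hb))
  · intro h
    obtain ⟨q, hq⟩ := walk_of_reach_induce h
    exact ⟨q, fun hc => (hq c hc) rfl⟩

lemma not_cut_iff [Finite V] (hc : G.Connected) {v : V} :
    ¬ IsCutVertex G v ↔ (G.induce {w | w ≠ v}).Preconnected := by
  unfold IsCutVertex
  rw [nc_eq_one_of_connected hc, not_lt, nc_le_one_iff]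

lemma ra_all_of_not_cut [Finite V] (hc : G.Connected) {v : V} (h : ¬ IsCutVertex G v)
    {x y : V} (hx : x ≠ v) (hy : y ≠ v) : RA G v x y :=
  (ra_iff hx hy).mpr (((not_cut_iff hc).mp h) ⟨x, hx⟩ ⟨y, hy⟩)

lemma exists_unreach_of_cut [Finite V] (hc : G.Connected) {v : V} (h : IsCutVertex G v) :
    ∃ x y : V, x ≠ v ∧ y ≠ v ∧ x ≠ y ∧ ¬ RA G v x y := by
  have h2 : 2 ≤ numComponents (G.induce {w | w ≠ v}) := by
    have := nc_eq_one_of_connected hc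
    unfold IsCutVertex at h; omega
  have hnt : Nontrivial (G.induce {w | w ≠ v}).ConnectedComponent := by
    by_contra hns
    rw [not_nontrivial_iff_subsingleton] at hns
    have hle : numComponents (G.induce {w | w ≠ v}) ≤ 1 := by
      cases isEmpty_or_nonempty (G.induce {w | w ≠ v}).ConnectedComponent with
      | inl he => simp [numComponents, Nat.card_of_isEmpty]
      | inr hn => exact le_of_eq (Nat.card_eq_one_iff_unique.mpr ⟨hns, hn⟩)
    omega
  obtain ⟨c1, c2, hne⟩ := hnt
  obtain ⟨a, ha⟩ := c1.exists_rep
  obtain ⟨b, hb⟩ := c2.exists_rep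
  refine ⟨a.val, b.val, a.property, b.property, ?_, ?_⟩
  · intro he
    exact hne (by rw [← ha, ← hb]; congr 1; exact Subtype.ext he)
  · intro hra
    have := (ra_iff a.property b.property).mp hra
    exact hne (by rw [← ha, ← hb]; exact ConnectedComponent.sound (by convert this <;> simp))

lemma cut_mono [Finite V] {G1 G2 : SimpleGraph V} (hle : G1 ≤ G2)
    (h1 : G1.Connected) (h2 : G2.Connected) {v : V} (h : IsCutVertex G2 v) :
    IsCutVertex G1 v := by
  unfold IsCutVertex at h ⊢
  rw [nc_eq_one_of_connected h1]
  rw [nc_eq_one_of_connected h2] at h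
  have : numComponents (G2.induce {w | w ≠ v}) ≤ numComponents (G1.induce {w | w ≠ v}) :=
    nc_mono (fun a b hab => hle hab)
  omega

lemma exists_ne_of_cut [Finite V] (hc : G.Connected) {v : V} (h : IsCutVertex G v) :
    ∃ x : V, x ≠ v := by
  obtain ⟨x, y, hx, -, -, -⟩ := exists_unreach_of_cut hc h
  exact ⟨x, hx⟩

/-- connected graph: any two vertices joined by a walk -/
lemma exists_walk_of_connected (hc : G.Connected) (x y : V) : Nonempty (G.Walk x y) :=
  hc.preconnected x y

lemma coe_walk_transfer {K : G.Subgraph} {u v : ↥K.verts} (p : K.coe.Walk u v) :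
    ∃ q : G.Walk u.val v.val, q.support = p.support.map Subtype.val ∧
      ∀ d ∈ q.darts, K.Adj d.toProd.1 d.toProd.2 := by
  induction p with
  | nil => exact ⟨Walk.nil, by simp, by simp⟩
  | @cons a b c hab q ih =>
    obtain ⟨q', hs, hd⟩ := ih
    have hK : K.Adj a.val b.val := hab
    refine ⟨Walk.cons (K.adj_sub hK) q', by simp [Walk.support_cons, hs], ?_⟩
    intro d hd'
    rcases (by simpa [Walk.darts_cons] using hd' :
        d = ⟨(a.val, b.val), K.adj_sub hK⟩ ∨ d ∈ q'.darts) with h | h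
    · subst h; exact hK
    · exact hd d h

lemma induce_walk_transfer {s : Set V} {u v : ↥s} (p : (G.induce s).Walk u v) :
    ∃ q : G.Walk u.val v.val, q.support = p.support.map Subtype.val := by
  induction p with
  | nil => exact ⟨Walk.nil, by simp⟩
  | @cons a b c hab q ih =>
    obtain ⟨q', hs⟩ := ih
    exact ⟨Walk.cons hab q', by show (a.val :: q'.support) = _; rw [hs]; rfl⟩

lemma reach_coe_induce_of_walk {K : G.Subgraph} {zs : ↥K.verts} :
    ∀ {x y : V} (p : G.Walk x y) (hx : x ∈ K.verts) (hy : y ∈ K.verts)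
    (hxz : (⟨x, hx⟩ : ↥K.verts) ≠ zs) (hyz : (⟨y, hy⟩ : ↥K.verts) ≠ zs),
    (∀ d ∈ p.darts, K.Adj d.toProd.1 d.toProd.2) → (∀ b ∈ p.support, b ≠ zs.val) →
    (K.coe.induce {w | w ≠ zs}).Reachable ⟨⟨x, hx⟩, hxz⟩ ⟨⟨y, hy⟩, hyz⟩ := by
  intro x y p
  induction p with
  | nil => intro hx hy hxz hyz _ _; exact Reachable.refl _
  | @cons a b c hab q ih =>
    intro hx hy hxz hyz hd hs
    have hK : K.Adj a b := hd ⟨(a, b), hab⟩ (by simp [Walk.darts_cons])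
    have hb : b ∈ K.verts := K.edge_vert hK.symm
    have hbz : (⟨b, hb⟩ : ↥K.verts) ≠ zs := by
      intro he
      exact (hs b (by simp [Walk.support_cons])) (by rw [← he])
    have h1 : (K.coe.induce {w | w ≠ zs}).Adj ⟨⟨a, hx⟩, hxz⟩ ⟨⟨b, hb⟩, hbz⟩ := hK
    refine h1.reachable.trans (ih hb hy hbz hyz ?_ ?_)
    · exact fun d hd' => hd d (by simp [Walk.darts_cons, hd'])
    · exact fun d hd' => hs d (by simp [Walk.support_cons]; right; exact hd')

/-- Translation of `TwoConnConv` on a subgraph's coercion into subgraph-level data. -/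
lemma twoConnConv_coe_iff [Finite V] {K : G.Subgraph} :
    TwoConnConv K.coe ↔ K.Connected ∧ ∀ z ∈ K.verts, (K.deleteVerts {z}).Preconnected := by
  rw [TwoConnConv, ← Subgraph.connected_iff']
  constructor
  · rintro ⟨hc, hz⟩
    refine ⟨hc, fun z hzv => ?_⟩
    have hnc := (not_cut_iff (Subgraph.connected_iff'.mp hc) (v := (⟨z, hzv⟩ : ↥K.verts))).mp
      (hz ⟨z, hzv⟩)
    constructor
    intro u v
    have hu2 : (⟨u.val, u.property.1⟩ : ↥K.verts) ≠ ⟨z, hzv⟩ := by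
      intro he
      exact (u.property.2 : u.val ∉ ({z} : Set V)) (by simpa using congrArg Subtype.val he)
    have hv2 : (⟨v.val, v.property.1⟩ : ↥K.verts) ≠ ⟨z, hzv⟩ := by
      intro he
      exact (v.property.2 : v.val ∉ ({z} : Set V)) (by simpa using congrArg Subtype.val he)
    obtain ⟨p0⟩ := hnc ⟨⟨u.val, u.property.1⟩, hu2⟩ ⟨⟨v.val, v.property.1⟩, hv2⟩
    obtain ⟨q, hqs⟩ := induce_walk_transfer p0
    obtain ⟨q', hq's, hq'd⟩ := coe_walk_transfer q
    have hsupp : ∀ b ∈ q'.support, b ∈ K.verts ∧ b ≠ z := by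
      intro b hb
      rw [hq's] at hb
      obtain ⟨ws, hws, rfl⟩ := List.mem_map.mp hb
      rw [hqs] at hws
      obtain ⟨t, ht, rfl⟩ := List.mem_map.mp hws
      refine ⟨t.val.property, fun he => t.property (Subtype.ext (by simpa using he))⟩
    have := reach_coe_of_walk (K := K.deleteVerts {z}) q' ⟨u.property.1, u.property.2⟩
      ⟨v.property.1, v.property.2⟩ ?_
    · exact this
    · intro d hd
      have hadj := hq'd d hd
      have h1 := hsupp d.toProd.1 (Walk.dart_fst_mem_support_of_mem_darts _ hd)
      have h2 := hsupp d.toProd.2 (Walk.dart_snd_mem_support_of_mem_darts _ hd)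
      exact Subgraph.deleteVerts_adj.mpr ⟨h1.1, by simpa using h1.2, h2.1, by simpa using h2.2, hadj⟩
  · rintro ⟨hc, hz⟩
    refine ⟨hc, fun zs => ?_⟩
    rw [not_cut_iff (Subgraph.connected_iff'.mp hc)]
    intro a b
    have haz : a.val.val ≠ zs.val := fun he => a.property (Subtype.ext he)
    have hbz : b.val.val ≠ zs.val := fun he => b.property (Subtype.ext he)
    have hprec := hz zs.val zs.property
    obtain ⟨p0⟩ := hprec.coe ⟨a.val.val, ⟨a.val.property, haz⟩⟩ ⟨b.val.val, ⟨b.val.property, hbz⟩⟩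
    obtain ⟨q, hqs, hqd⟩ := coe_walk_transfer p0
    have hsupp : ∀ c ∈ q.support, c ∈ K.verts ∧ c ≠ zs.val := by
      intro c hcs
      rw [hqs] at hcs
      obtain ⟨t, ht, rfl⟩ := List.mem_map.mp hcs
      exact ⟨t.property.1, by simpa using t.property.2⟩
    have := reach_coe_induce_of_walk (K := K) (zs := zs) q a.val.property b.val.property
      a.property b.property ?_ ?_
    · exact this
    · intro d hd
      have := hqd d hd
      rw [Subgraph.deleteVerts_adj] at this
      exact this.2.2.2.2
    · exact fun c hcs => (hsupp c hcs).2

lemma twoConn_subgraphOfAdj [Finite V] {a b : V} (hab : G.Adj a b) :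
    TwoConnConv (G.subgraphOfAdj hab).coe := by
  rw [twoConnConv_coe_iff]
  refine ⟨Subgraph.subgraphOfAdj_connected hab, fun z hzv => ?_⟩
  constructor
  intro u v
  by_cases he : u.val = v.val
  · have : u = v := Subtype.ext he
    rw [this]
  · exfalso
    have hu := u.property
    have hv := v.property
    simp only [Subgraph.deleteVerts_verts, subgraphOfAdj_verts] at hu hv
    simp only [subgraphOfAdj_verts] at hzv
    have hu1 : u.val = a ∨ u.val = b := by simpa using hu.1
    have hv1 : v.val = a ∨ v.val = b := by simpa using hv.1
    have hu2 : u.val ≠ z := by simpa using hu.2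
    have hv2 : v.val ≠ z := by simpa using hv.2
    have hz : z = a ∨ z = b := by simpa using hzv
    rcases hz with rfl | rfl <;> rcases hu1 with h1 | h1 <;> rcases hv1 with h2 | h2 <;>
      simp_all

lemma block_subsingleton_adj {H : G.Subgraph} {x : V} (hv : H.verts = {x})
    {a b : V} (hadj : H.Adj a b) : False := by
  have ha : a ∈ H.verts := H.edge_vert hadj
  have hb : b ∈ H.verts := H.edge_vert hadj.symm
  rw [hv] at ha hb
  exact G.loopless.irrefl x (by
    have := H.adj_sub hadj
    rwa [show a = x from ha, show b = x from hb] at this)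

lemma block_two_verts [Finite V] (hGc : G.Connected) {H : G.Subgraph}
    (hB : IsBlock G H) {x : V} (hx : x ∈ H.verts) {y : V} (hy : y ≠ x) :
    ∃ u ∈ H.verts, u ≠ x := by
  by_contra hcon
  push_neg at hcon
  have hvx : H.verts = {x} := Set.eq_singleton_iff_unique_mem.mpr ⟨hx, hcon⟩
  obtain ⟨p⟩ := exists_walk_of_connected hGc x y
  cases p with
  | nil => exact hy rfl
  | @cons _ u _ hadj q =>
    have hle : H ≤ G.subgraphOfAdj hadj := by
      constructor
      · rw [hvx]; simp [subgraphOfAdj_verts]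
      · intro a b hab; exact absurd hab (fun hh => block_subsingleton_adj hvx hh)
    have := hB.2 _ hle (twoConn_subgraphOfAdj hadj)
    have hu : u ∈ H.verts := by
      rw [← this]; simp [subgraphOfAdj_verts]
    rw [hvx] at hu
    exact hadj.ne (by rw [hu])

lemma precon_mono_verts_eq {H K : G.Subgraph} (hle : H ≤ K) (hv : H.verts = K.verts)
    (h : H.Preconnected) : K.Preconnected := by
  constructor
  intro u v
  have hu : u.val ∈ H.verts := by rw [hv]; exact u.property
  have hvv : v.val ∈ H.verts := by rw [hv]; exact v.property
  have := (h.coe ⟨u.val, hu⟩ ⟨v.val, hvv⟩).map (Subgraph.inclusion hle)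
  exact this

lemma deleteVerts_mono_left {H K : G.Subgraph} (hle : H ≤ K) (s : Set V) :
    H.deleteVerts s ≤ K.deleteVerts s := by
  constructor
  · intro a ha
    exact ⟨hle.1 ha.1, ha.2⟩
  · intro a b hab
    rw [Subgraph.deleteVerts_adj] at hab ⊢
    exact ⟨hle.1 hab.1, hab.2.1, hle.1 hab.2.2.1, hab.2.2.2.1, hle.2 hab.2.2.2.2⟩

lemma block_induced [Finite V] {H : G.Subgraph} (hB : IsBlock G H) :
    H = (⊤ : G.Subgraph).induce H.verts := by
  set K := (⊤ : G.Subgraph).induce H.verts with hK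
  have hvv : H.verts = K.verts := by simp [hK]
  have hle : H ≤ K := by
    constructor
    · rw [hvv]
    · intro a b hab
      exact ⟨H.edge_vert hab, H.edge_vert hab.symm, by simpa using H.adj_sub hab⟩
  refine (hB.2 K hle ?_).symm
  rw [twoConnConv_coe_iff]
  obtain ⟨hc, hdel⟩ := twoConnConv_coe_iff.mp hB.1
  refine ⟨?_, ?_⟩
  · rw [Subgraph.connected_iff] at hc ⊢
    exact ⟨precon_mono_verts_eq hle hvv hc.1, hvv ▸ hc.2⟩
  · intro z hzv
    have := hdel z (hvv ▸ hzv)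
    exact precon_mono_verts_eq (deleteVerts_mono_left hle _)
      (by simp [Subgraph.deleteVerts_verts, hvv]) this

/-- Reachability inside a subgraph, phrased on ambient vertices. -/
def SReach (K : G.Subgraph) (a b : V) : Prop :=
  ∃ (ha : a ∈ K.verts) (hb : b ∈ K.verts), K.coe.Reachable ⟨a, ha⟩ ⟨b, hb⟩

lemma SReach.rfl {K : G.Subgraph} {a : V} (ha : a ∈ K.verts) : SReach K a a :=
  ⟨ha, ha, Reachable.refl _⟩

lemma SReach.symm {K : G.Subgraph} {a b : V} (h : SReach K a b) : SReach K b a := by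
  obtain ⟨ha, hb, hr⟩ := h; exact ⟨hb, ha, hr.symm⟩

lemma SReach.trans {K : G.Subgraph} {a b c : V} (h : SReach K a b) (h' : SReach K b c) :
    SReach K a c := by
  obtain ⟨ha, hb, hr⟩ := h; obtain ⟨hb', hc, hr'⟩ := h'
  exact ⟨ha, hc, hr.trans hr'⟩

lemma SReach.of_adj {K : G.Subgraph} {a b : V} (h : K.Adj a b) : SReach K a b :=
  ⟨K.edge_vert h, K.edge_vert h.symm, Adj.reachable h⟩

lemma SReach.mono {K K' : G.Subgraph} (hle : K ≤ K') {a b : V} (h : SReach K a b) :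
    SReach K' a b := by
  obtain ⟨ha, hb, hr⟩ := h
  exact ⟨hle.1 ha, hle.1 hb, hr.map (Subgraph.inclusion hle)⟩

lemma precon_iff_sreach {K : G.Subgraph} :
    K.Preconnected ↔ ∀ a ∈ K.verts, ∀ b ∈ K.verts, SReach K a b := by
  constructor
  · intro h a ha b hb; exact ⟨ha, hb, h.coe ⟨a, ha⟩ ⟨b, hb⟩⟩
  · intro h
    constructor
    intro u v
    obtain ⟨ha, hb, hr⟩ := h u.val u.property v.val v.property
    exact hr

lemma deleteVerts_eq_of_not_mem {K : G.Subgraph} {z : V} (h : z ∉ K.verts) :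
    K.deleteVerts {z} = K := by
  ext a b
  · simp only [Subgraph.deleteVerts_verts, Set.mem_diff, Set.mem_singleton_iff]
    exact ⟨fun hh => hh.1, fun hh => ⟨hh, fun he => h (he ▸ hh)⟩⟩
  · rw [Subgraph.deleteVerts_adj]
    constructor
    · exact fun hh => hh.2.2.2.2
    · intro hh
      refine ⟨K.edge_vert hh, ?_, K.edge_vert hh.symm, ?_, hh⟩ <;>
        simp only [Set.mem_singleton_iff] <;> rintro rfl <;>
        [exact h (K.edge_vert hh); exact h (K.edge_vert hh.symm)]

lemma mem_walk_toSubgraph_verts {x y b : V} {p : G.Walk x y} :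
    b ∈ p.toSubgraph.verts ↔ b ∈ p.support := by
  rw [Walk.verts_toSubgraph]; rfl

lemma walk_del_reach {x y z : V} (p : G.Walk x y) (hp : p.IsPath) :
    ∀ b ∈ p.support, b ≠ z →
      (x ≠ z ∧ SReach (p.toSubgraph.deleteVerts {z}) b x) ∨
      (y ≠ z ∧ SReach (p.toSubgraph.deleteVerts {z}) b y) := by
  induction p with
  | nil =>
    intro b hb hbz
    simp only [Walk.support_nil, List.mem_singleton] at hb
    subst hb
    refine Or.inl ⟨hbz, SReach.rfl ?_⟩
    simp only [Subgraph.deleteVerts_verts, Set.mem_diff, Set.mem_singleton_iff]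
    exact ⟨by rw [mem_walk_toSubgraph_verts]; exact Walk.start_mem_support _, hbz⟩
  | @cons x x' y hadj rest ih =>
    intro b hb hbz
    have hrp : rest.IsPath := hp.of_cons
    have hxrest : x ∉ rest.support := (Walk.cons_isPath_iff _ _ |>.mp hp).2
    rcases (by simpa [Walk.support_cons] using hb : b = x ∨ b ∈ rest.support) with rfl | hbr
    · exact Or.inl ⟨hbz, SReach.rfl (by
        simp only [Subgraph.deleteVerts_verts, Set.mem_diff, Set.mem_singleton_iff]
        exact ⟨by rw [mem_walk_toSubgraph_verts]; exact Walk.start_mem_support _, hbz⟩)⟩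
    · have hle : rest.toSubgraph.deleteVerts {z} ≤ (Walk.cons hadj rest).toSubgraph.deleteVerts {z} :=
        deleteVerts_mono_left (by rw [Walk.toSubgraph]; exact le_sup_right) _
      rcases ih hrp b hbr hbz with ⟨hx'z, hre⟩ | ⟨hyz, hre⟩
      · by_cases hxz : x ≠ z
        · refine Or.inl ⟨hxz, (hre.mono hle).trans (SReach.of_adj ?_)⟩
          rw [Subgraph.deleteVerts_adj]
          refine ⟨?_, by simpa using hx'z, ?_, by simpa using hxz, ?_⟩
          · rw [mem_walk_toSubgraph_verts]; simp [Walk.support_cons]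
          · rw [mem_walk_toSubgraph_verts]; simp [Walk.support_cons]
          · rw [Walk.toSubgraph]
            exact Or.inl (by simp)
        · push_neg at hxz
          subst hxz
          have hnz : (x : V) ∉ rest.toSubgraph.verts := by
            rw [mem_walk_toSubgraph_verts]; exact hxrest
          have heq : rest.toSubgraph.deleteVerts {x} = rest.toSubgraph :=
            deleteVerts_eq_of_not_mem hnz
          have hyz : y ≠ x := fun he => hxrest (he ▸ rest.end_mem_support)
          refine Or.inr ⟨hyz, (hre.mono hle).trans (SReach.mono hle ?_)⟩
          rw [heq]
          have hc := rest.toSubgraph_connected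
          exact (precon_iff_sreach.mp hc.preconnected) x'
            (by rw [mem_walk_toSubgraph_verts]; exact rest.start_mem_support) y
            (by rw [mem_walk_toSubgraph_verts]; exact rest.end_mem_support)
      · exact Or.inr ⟨hyz, hre.mono hle⟩

/-- first entry of a walk into a set -/
lemma walk_first_enter {S : Set V} : ∀ {x y : V} (p : G.Walk x y), y ∈ S →
    ∃ (a : V) (q : G.Walk x a), a ∈ S ∧ (∀ b ∈ q.support, b ∈ S → b = a) ∧
      (∀ b ∈ q.support, b ∈ p.support) := by
  intro x y p
  induction p with
  | nil =>
    intro hy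
    exact ⟨_, Walk.nil, hy, by simp, by simp⟩
  | @cons x x' y hadj rest ih =>
    intro hy
    by_cases hxS : x ∈ S
    · exact ⟨x, Walk.nil, hxS, by simp, by simp [Walk.support_cons]⟩
    · obtain ⟨a, q, haS, hq1, hq2⟩ := ih hy
      refine ⟨a, Walk.cons hadj q, haS, ?_, ?_⟩
      · intro b hbs hbS
        rcases (by simpa [Walk.support_cons] using hbs : b = x ∨ b ∈ q.support) with rfl | hbq
        · exact absurd hbS hxS
        · exact hq1 b hbq hbS
      · intro b hbs
        rcases (by simpa [Walk.support_cons] using hbs : b = x ∨ b ∈ q.support) with rfl | hbq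
        · simp [Walk.support_cons]
        · simp only [Walk.support_cons, List.mem_cons]
          right; exact hq2 b hbq

lemma Subgraph.Connected.sup {H K : G.Subgraph} (hH : H.Connected) (hK : K.Connected)
    (hn : (H ⊓ K).verts.Nonempty) : (H ⊔ K).Connected :=
  Subgraph.connected_sup hH.preconnected hK.preconnected hn

lemma leaf_interior_closed [Finite V] (hGc : G.Connected) {H : G.Subgraph} (hB : IsBlock G H)
    {v : V} (hvH : v ∈ H.verts) {u w : V} (hu : u ∈ H.verts) (huv : u ≠ v)
    (hucut : ¬ IsCutVertex G u) (huw : G.Adj u w) : w ∈ H.verts := by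
  by_contra hwH
  obtain ⟨hHconn, hHdel⟩ := twoConnConv_coe_iff.mp hB.1
  have hra : RA G u w v := ra_all_of_not_cut hGc hucut (Ne.symm huw.ne) (Ne.symm huv)
  obtain ⟨p, hup⟩ := hra
  obtain ⟨a, q0, haH, hq0A, hq0sub⟩ := walk_first_enter p hvH
  classical
  set q : G.Walk w a := (q0.toPath : G.Walk w a) with hqdef
  have hqp : q.IsPath := q0.toPath.property
  have hqsub : ∀ b ∈ q.support, b ∈ q0.support := fun b hb => q0.support_toPath_subset hb
  have huq : u ∉ q.support := fun hh => hup (hq0sub u (hqsub u hh))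
  have hqA : ∀ b ∈ q.support, b ∈ H.verts → b = a := fun b hb => hq0A b (hqsub b hb)
  have hau : a ≠ u := fun he => huq (he ▸ q.end_mem_support)
  set K2 : G.Subgraph := G.subgraphOfAdj huw with hK2def
  set QS : G.Subgraph := q.toSubgraph with hQSdef
  set HK : G.Subgraph := H ⊔ K2 ⊔ QS with hHKdef
  have hle : H ≤ HK := le_trans le_sup_left le_sup_left
  have hQSle : QS ≤ HK := le_sup_right
  have hK2le : K2 ≤ HK := le_trans le_sup_right le_sup_left
  have hwHK : w ∈ HK.verts := by
    rw [hHKdef]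
    simp only [Subgraph.verts_sup]
    left; right; rw [hK2def]; simp
  have huHK : u ∈ HK.verts := hle.1 hu
  have hvHK : v ∈ HK.verts := hle.1 hvH
  have hwQ : w ∈ q.support := q.start_mem_support
  have hHKadj : HK.Adj u w := hK2le.2 (by rw [hK2def]; simp)
  -- coverage of vertices
  have hcover : ∀ t ∈ HK.verts, t ∈ H.verts ∨ t ∈ q.support := by
    intro t ht
    rw [hHKdef] at ht
    simp only [Subgraph.verts_sup] at ht
    rcases ht with (ht | ht) | ht
    · exact Or.inl ht
    · rw [hK2def] at ht
      simp only [subgraphOfAdj_verts, Set.mem_insert_iff, Set.mem_singleton_iff] at ht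
      rcases ht with rfl | rfl
      · exact Or.inl hu
      · exact Or.inr hwQ
    · exact Or.inr (mem_walk_toSubgraph_verts.mp ht)
  -- two-connectivity of the enlarged subgraph
  have htc : TwoConnConv HK.coe := by
    rw [twoConnConv_coe_iff]
    constructor
    · refine Subgraph.Connected.sup (Subgraph.Connected.sup ?_ ?_ ?_) ?_ ?_
      · exact hHconn
      · exact Subgraph.subgraphOfAdj_connected huw
      · exact ⟨u, hu, by rw [hK2def]; simp⟩
      · exact q.toSubgraph_connected
      · refine ⟨w, ?_, ?_⟩
        · simp only [Subgraph.verts_sup]; right; rw [hK2def]; simp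
        · exact mem_walk_toSubgraph_verts.mpr hwQ
    · intro z hz
      rw [precon_iff_sreach]
      set Dz := HK.deleteVerts {z} with hDzdef
      -- reachability inside H minus z
      have hA : ∀ a' b' : V, a' ∈ H.verts → b' ∈ H.verts → a' ≠ z → b' ≠ z →
          SReach Dz a' b' := by
        intro a' b' ha' hb' haz hbz
        have hpre : (H.deleteVerts {z}).Preconnected := by
          by_cases hzH : z ∈ H.verts
          · exact hHdel z hzH
          · rw [deleteVerts_eq_of_not_mem hzH]
            exact hHconn.preconnected
        have := precon_iff_sreach.mp hpre a' (by exact ⟨ha', by simpa using haz⟩)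
          b' (by exact ⟨hb', by simpa using hbz⟩)
        exact this.mono (deleteVerts_mono_left hle _)
      -- main hub argument
      have hhub : ∃ hub, hub ∈ HK.verts ∧ hub ≠ z ∧
          ∀ t ∈ HK.verts, t ≠ z → SReach Dz t hub := by
        by_cases hzu : z = u
        · subst hzu
          refine ⟨v, hvHK, Ne.symm huv, ?_⟩
          intro t ht htz
          rcases hcover t ht with htH | htQ
          · exact hA t v htH hvH htz (Ne.symm huv)
          · have hzQ : (z : V) ∉ QS.verts := by
              rw [hQSdef, mem_walk_toSubgraph_verts]; exact huq
            have heq : QS.deleteVerts {z} = QS := deleteVerts_eq_of_not_mem hzQ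
            have h1 : SReach QS t a := precon_iff_sreach.mp
              q.toSubgraph_connected.preconnected t (mem_walk_toSubgraph_verts.mpr htQ)
              a (mem_walk_toSubgraph_verts.mpr q.end_mem_support)
            have h2 : SReach Dz t a := by
              rw [hDzdef]
              exact SReach.mono (deleteVerts_mono_left hQSle _) (by rw [heq]; exact h1)
            exact h2.trans (hA a v haH hvH hau (Ne.symm huv))
        · refine ⟨u, huHK, fun he => hzu he.symm, ?_⟩
          have huz : u ≠ z := fun he => hzu he.symm
          intro t ht htz
          rcases hcover t ht with htH | htQ
          · exact hA t u htH hu htz huz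
          · rcases walk_del_reach q hqp t htQ htz with ⟨hwz, hre⟩ | ⟨haz, hre⟩
            · refine (hre.mono (deleteVerts_mono_left hQSle _)).trans (SReach.of_adj ?_)
              rw [Subgraph.deleteVerts_adj]
              exact ⟨hwHK, by simpa using hwz, huHK, by simpa using huz, hHKadj.symm⟩
            · exact (hre.mono (deleteVerts_mono_left hQSle _)).trans (hA a u haH hu haz huz)
      obtain ⟨hub, hhub1, hhub2, hhub3⟩ := hhub
      intro t1 ht1 t2 ht2
      rw [Subgraph.deleteVerts_verts] at ht1 ht2
      exact (hhub3 t1 ht1.1 (by simpa using ht1.2)).trans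
        (hhub3 t2 ht2.1 (by simpa using ht2.2)).symm
  have hfin := hB.2 HK hle htc
  rw [hfin] at hwHK
  exact hwH hwHK

lemma exists_first_edge {x y : V} (p : G.Walk x y) (hxy : x ≠ y) :
    ∃ (z : V) (hadj : G.Adj x z) (rest : G.Walk z y), p = Walk.cons hadj rest := by
  cases p with
  | nil => exact absurd rfl hxy
  | cons h rest => exact ⟨_, h, rest, rfl⟩

/-- The set of vertices reachable from `u0` by walks avoiding `c`. -/
def CompAvoid (G : SimpleGraph V) (c u0 : V) : Set V := {x | RA G c x u0}

lemma RA.adj' {c x y : V} (hadj : G.Adj x y) (hx : x ≠ c) (hy : y ≠ c) : RA G c x y := by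
  refine ⟨hadj.toWalk, ?_⟩
  simp only [Walk.support_cons, Walk.support_nil, List.mem_cons, List.mem_singleton]
  rintro (rfl | rfl | h)
  · exact hx rfl
  · exact hy rfl
  · exact List.not_mem_nil h

lemma RA_support {c x y : V} (p : G.Walk x y) (hcp : c ∉ p.support) :
    ∀ b ∈ p.support, RA G c b y := by
  classical
  intro b hb
  exact ⟨p.dropUntil b hb, fun hh => hcp (Walk.support_dropUntil_subset _ _ hh)⟩

lemma comp_closure {c u0 x y : V} (hx : x ∈ CompAvoid G c u0) (hadj : G.Adj x y)
    (hy : y ≠ c) : y ∈ CompAvoid G c u0 :=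
  (RA.adj' hadj.symm hy hx.ne_left).trans hx

lemma comp_mem_stays {c u0 : V} {x y : V} (p : G.Walk x y) (hcp : c ∉ p.support)
    (hy : y ∈ CompAvoid G c u0) : ∀ b ∈ p.support, b ∈ CompAvoid G c u0 := by
  intro b hb
  exact (RA_support p hcp b hb).trans hy

lemma comp_neighbor {c u0 : V} (hGc : G.Connected) (hu0 : u0 ≠ c) :
    ∃ x1 ∈ CompAvoid G c u0, G.Adj c x1 := by
  classical
  obtain ⟨p⟩ := exists_walk_of_connected hGc u0 c
  have hcs : c ∈ p.support := p.end_mem_support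
  have hcount := p.count_support_takeUntil_eq_one hcs
  set q : G.Walk u0 c := p.takeUntil c hcs with hqdef
  obtain ⟨x1, hadj, rest, heq⟩ := exists_first_edge q.reverse (Ne.symm hu0)
  have hsupp : q.reverse.support = c :: rest.support := by
    rw [heq, Walk.support_cons]
  have hrest : c ∉ rest.support := by
    intro hh
    have h2 : q.reverse.support.count c ≥ 2 := by
      rw [hsupp]
      simp only [List.count_cons_self]
      have := List.count_pos_iff.mpr hh
      omega
    rw [Walk.support_reverse, List.count_reverse] at h2
    omega
  exact ⟨x1, ⟨rest, hrest⟩, hadj⟩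

lemma reach_out {c u0 u b : V} (hGc : G.Connected) (hu : u ∈ CompAvoid G c u0)
    (hbC : b ∉ CompAvoid G c u0) (hbc : b ≠ c) : RA G u b c := by
  classical
  obtain ⟨p⟩ := exists_walk_of_connected hGc b c
  have hcs : c ∈ p.support := p.end_mem_support
  set q : G.Walk b c := p.takeUntil c hcs with hqdef
  have hcount := p.count_support_takeUntil_eq_one hcs
  by_cases huq : u ∈ q.support
  · exfalso
    -- the prefix of q up to u avoids c, so b would be in the component
    have huc : u ≠ c := hu.ne_left
    have hcq' : c ∉ (q.takeUntil u huq).support := by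
      intro hh
      have hsp : (q.takeUntil u huq).support ++ (q.dropUntil u huq).support.tail
          = q.support := by
        rw [← Walk.support_append]
        exact congrArg Walk.support (q.take_spec huq)
      have hge : q.support.count c ≥ 2 := by
        have h1 : (q.takeUntil u huq).support.count c ≥ 1 := List.count_pos_iff.mpr hh
        have h2 : ((q.dropUntil u huq).support.tail).count c ≥ 1 := by
          have hcd : c ∈ (q.dropUntil u huq).support := Walk.end_mem_support _
          rcases (Walk.mem_support_iff _).mp hcd with h | h
          · exact absurd h.symm huc
          · exact List.count_pos_iff.mpr h
        rw [← hsp, List.count_append]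
        omega
      rw [← hqdef] at hcount
      omega
    exact absurd (RA.trans ⟨q.takeUntil u huq, hcq'⟩ hu) hbC
  · exact ⟨q, huq⟩

lemma sreach_ind_of_walk {S : Set V} : ∀ {x y : V} (p : G.Walk x y),
    (∀ b ∈ p.support, b ∈ S) → SReach ((⊤ : G.Subgraph).induce S) x y := by
  intro x y p
  induction p with
  | nil =>
    intro hs
    exact SReach.rfl (by simpa using hs _ (Walk.start_mem_support _))
  | @cons a b c hadj rest ih =>
    intro hs
    refine SReach.trans (SReach.of_adj ?_) (ih fun d hd => hs d (by simp [Walk.support_cons]; right; exact hd))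
    exact ⟨hs a (by simp [Walk.support_cons]), hs b (by simp [Walk.support_cons]), by simpa using hadj⟩

lemma sreach_ind_del_of_walk {S : Set V} {z : V} : ∀ {x y : V} (p : G.Walk x y),
    (∀ b ∈ p.support, b ∈ S ∧ b ≠ z) →
    SReach (((⊤ : G.Subgraph).induce S).deleteVerts {z}) x y := by
  intro x y p
  induction p with
  | nil =>
    intro hs
    obtain ⟨h1, h2⟩ := hs _ (Walk.start_mem_support _)
    exact SReach.rfl (by exact ⟨by simpa using h1, by simpa using h2⟩)
  | @cons a b c hadj rest ih =>
    intro hs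
    obtain ⟨ha1, ha2⟩ := hs a (by simp [Walk.support_cons])
    obtain ⟨hb1, hb2⟩ := hs b (by simp [Walk.support_cons])
    refine SReach.trans (SReach.of_adj ?_)
      (ih fun d hd => hs d (by simp [Walk.support_cons]; right; exact hd))
    rw [Subgraph.deleteVerts_adj]
    exact ⟨by simpa using ha1, by simpa using ha2, by simpa using hb1, by simpa using hb2,
      by simp only [Subgraph.induce_adj]; exact ⟨ha1, hb1, by simpa using hadj⟩⟩

/-- if a walk starts outside `S ∪ {c}` and ends inside, it re-enters through `c`. -/
lemma re_enter {c u0 : V} : ∀ {s y : V} (q : G.Walk s y),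
    s ∉ CompAvoid G c u0 ∪ {c} → y ∈ CompAvoid G c u0 ∪ {c} →
    ∃ q' : G.Walk c y, q'.length ≤ q.length ∧ ∀ b ∈ q'.support, b ∈ q.support := by
  intro s y q
  induction q with
  | nil => intro hs hy; exact absurd hy hs
  | @cons a b c' hadj rest ih =>
    intro hs hy
    by_cases hbm : b ∈ CompAvoid G c u0 ∪ {c}
    · have hbc : b = c := by
        rcases hbm with hbC | hbc
        · exfalso
          have hac : a ≠ c := by
            intro he; exact hs (Or.inr (by simp [he]))
          exact hs (Or.inl (comp_closure hbC hadj.symm hac))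
        · exact hbc
      subst hbc
      refine ⟨rest, by rw [Walk.length_cons]; omega, fun d hd => by
        simp [Walk.support_cons]; right; exact hd⟩
    · obtain ⟨q', hl, hsub⟩ := ih hbm hy
      refine ⟨q', le_trans hl (by rw [Walk.length_cons]; omega), fun d hd => by
        simp [Walk.support_cons]; right; exact hsub d hd⟩

/-- walks between vertices of `C ∪ {c}` avoiding `u` yield reachability within the piece -/
lemma cross_walk {c u0 u : V} : ∀ (n : ℕ) {x y : V} (p : G.Walk x y), p.length ≤ n →
    x ∈ CompAvoid G c u0 ∪ {c} → y ∈ CompAvoid G c u0 ∪ {c} → u ∉ p.support →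
    SReach (((⊤ : G.Subgraph).induce (CompAvoid G c u0 ∪ {c})).deleteVerts {u}) x y := by
  intro n
  induction n with
  | zero =>
    intro x y p hl hx hy hu
    have : p.length = 0 := Nat.le_zero.mp hl
    have hxy : x = y := Walk.eq_of_length_eq_zero this
    subst hxy
    refine SReach.rfl ⟨by simpa using hx, fun he => hu ?_⟩
    have hxu : x = u := Set.mem_singleton_iff.mp he
    rw [← hxu]
    exact p.start_mem_support
  | succ n ih =>
    intro x y p hl hx hy hu
    cases p with
    | nil =>
      refine SReach.rfl ⟨by simpa using hx, fun he => hu ?_⟩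
      have hxu : _ = u := Set.mem_singleton_iff.mp he
      rw [← hxu]
      exact Walk.start_mem_support _
    | @cons _ b _ hadj rest =>
      have hbu : b ≠ u := by
        intro he
        apply hu
        rw [← he, Walk.support_cons]
        exact List.mem_cons_of_mem _ rest.start_mem_support
      have hxu : x ≠ u := by
        intro he
        apply hu
        rw [← he]
        exact Walk.start_mem_support _
      have hurest : u ∉ rest.support := fun hh => hu (by simp [Walk.support_cons]; right; exact hh)
      by_cases hbm : b ∈ CompAvoid G c u0 ∪ {c}
      · have hadj' : (((⊤ : G.Subgraph).induce (CompAvoid G c u0 ∪ {c})).deleteVerts {u}).Adj x b := by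
          rw [Subgraph.deleteVerts_adj]
          exact ⟨by simpa using hx, by simpa using hxu, by simpa using hbm, by simpa using hbu,
            by simp only [Subgraph.induce_adj]; exact ⟨hx, hbm, by simpa using hadj⟩⟩
        refine SReach.trans (SReach.of_adj hadj') (ih rest ?_ hbm hy hurest)
        have := Walk.length_cons hadj rest
        omega
      · have hxc : x = c := by
          rcases hx with hxC | hxc
          · exfalso
            have hbc : b ≠ c := fun he => hbm (Or.inr (by simp [he]))
            exact hbm (Or.inl (comp_closure hxC hadj hbc))
          · exact hxc
        obtain ⟨q', hql, hqsub⟩ := re_enter rest hbm hy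
        have huq' : u ∉ q'.support := fun hh => hurest (hqsub u hh)
        have hq'l : q'.length ≤ n := by
          have := Walk.length_cons hadj rest
          omega
        have := ih q' hq'l (Or.inr rfl) hy huq'
        rw [hxc]
        exact this

lemma exists_min_pair [Finite V] (hGc : G.Connected) (P : Set V) {c0 u00 : V}
    (hc0 : IsCutVertex G c0) (hu00 : u00 ≠ c0) (hP : CompAvoid G c0 u00 ⊆ P) :
    ∃ c u0, IsCutVertex G c ∧ u0 ≠ c ∧ CompAvoid G c u0 ⊆ P ∧
      ∀ x ∈ CompAvoid G c u0, ¬ IsCutVertex G x := by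
  set S : Set ℕ := {n | ∃ c u0, IsCutVertex G c ∧ u0 ≠ c ∧ CompAvoid G c u0 ⊆ P ∧
    n = (CompAvoid G c u0).ncard} with hSdef
  have hS : S.Nonempty := ⟨_, c0, u00, hc0, hu00, hP, rfl⟩
  obtain ⟨c, u0, hc, hu0, hPP, hn⟩ := Nat.sInf_mem hS
  refine ⟨c, u0, hc, hu0, hPP, ?_⟩
  intro u huC hucut
  have huc : u ≠ c := huC.ne_left
  have hx0 : ∃ x0, x0 ≠ u ∧ ¬ RA G u x0 c := by
    by_contra hcon
    push_neg at hcon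
    obtain ⟨a, b, ha, hb, hab, hnr⟩ := exists_unreach_of_cut hGc hucut
    exact hnr ((hcon a ha).trans (hcon b hb).symm)
  obtain ⟨x0, hx0u, hx0⟩ := hx0
  have hx0c : x0 ≠ c := by
    rintro rfl
    exact hx0 (RA.refl (Ne.symm huc))
  have hx0C : x0 ∈ CompAvoid G c u0 := by
    by_contra hh
    exact hx0 (reach_out hGc huC hh hx0c)
  have hsub : CompAvoid G u x0 ⊆ CompAvoid G c u0 \ {u} := by
    intro b hb
    obtain ⟨p, hup⟩ := hb
    have hcp : c ∉ p.support := by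
      intro hh
      exact hx0 (RA.symm (RA_support p hup c hh))
    refine ⟨RA.trans ⟨p, hcp⟩ hx0C, ?_⟩
    simp only [Set.mem_singleton_iff]
    intro he
    apply hup
    rw [← he]
    exact p.start_mem_support
  have hlt : (CompAvoid G u x0).ncard < (CompAvoid G c u0).ncard := by
    apply Set.ncard_lt_ncard _ (Set.toFinite _)
    constructor
    · exact hsub.trans Set.diff_subset
    · intro hCsub
      have h1 : u ∈ CompAvoid G u x0 := hCsub huC
      have h2 := hsub h1
      exact h2.2 rfl
  have hmem : (CompAvoid G u x0).ncard ∈ S := ⟨u, x0, hucut, hx0u, (hsub.trans Set.diff_subset).trans hPP, rfl⟩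
  have := Nat.sInf_le hmem
  omega

lemma leaf_block_of_min_pair [Finite V] (hGc : G.Connected) {c u0 : V} (hc : IsCutVertex G c)
    (hu0 : u0 ≠ c) (hnocut : ∀ x ∈ CompAvoid G c u0, ¬ IsCutVertex G x) :
    IsLeafBlock G ((⊤ : G.Subgraph).induce (CompAvoid G c u0 ∪ {c})) := by
  set C := CompAvoid G c u0 with hCdef
  set B : G.Subgraph := (⊤ : G.Subgraph).induce (C ∪ {c}) with hBdef
  have hu0C : u0 ∈ C := RA.refl hu0
  have hCne : ∀ x ∈ C, x ≠ c := fun x hx => hx.ne_left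
  have hCC : ∀ x ∈ C, ∀ y ∈ C, SReach B x y := by
    intro x hx y hy
    obtain ⟨p, hcp⟩ := RA.trans hx (RA.symm hy)
    exact sreach_ind_of_walk p (fun b hb => Or.inl (comp_mem_stays p hcp hy b hb))
  obtain ⟨x1, hx1C, hcx1⟩ := comp_neighbor hGc hu0
  have hconn : B.Connected := by
    rw [Subgraph.connected_iff]
    constructor
    · rw [precon_iff_sreach]
      intro a ha b hb
      have hx1r : ∀ t ∈ C ∪ {c}, SReach B t x1 := by
        rintro t (htC | htc)
        · exact hCC t htC x1 hx1C
        · have htc' : t = c := htc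
          subst htc'
          exact SReach.of_adj
            ⟨Or.inr rfl, Or.inl hx1C, by simpa using hcx1⟩
      exact (hx1r a ha).trans (hx1r b hb).symm
    · exact ⟨c, Or.inr rfl⟩
  have htcc : TwoConnConv B.coe := by
    rw [twoConnConv_coe_iff]
    refine ⟨hconn, ?_⟩
    intro z hzv
    rw [precon_iff_sreach]
    intro a ha b hb
    rw [Subgraph.deleteVerts_verts] at ha hb
    obtain ⟨haB, haz⟩ := ha
    obtain ⟨hbB, hbz⟩ := hb
    have haz' : a ≠ z := by simpa using haz
    have hbz' : b ≠ z := by simpa using hbz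
    by_cases hzc : z = c
    · subst hzc
      have haC : a ∈ C := by
        rcases haB with h | h
        · exact h
        · exact absurd h haz'
      have hbC : b ∈ C := by
        rcases hbB with h | h
        · exact h
        · exact absurd h hbz'
      obtain ⟨p, hcp⟩ := RA.trans haC (RA.symm hbC)
      exact sreach_ind_del_of_walk p (fun d hd =>
        ⟨Or.inl (comp_mem_stays p hcp hbC d hd),
         hCne d (comp_mem_stays p hcp hbC d hd)⟩)
    · have hzC : z ∈ C := by
        rcases hzv with h | h
        · exact h
        · exact absurd h hzc
      obtain ⟨p, hzp⟩ := ra_all_of_not_cut hGc (hnocut z hzC) haz' hbz'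
      exact cross_walk p.length p le_rfl haB hbB hzp
  have hmax : ∀ H' : G.Subgraph, B ≤ H' → TwoConnConv H'.coe → H' = B := by
    intro H' hle htc'
    obtain ⟨hc', hdel'⟩ := twoConnConv_coe_iff.mp htc'
    have hcH' : c ∈ H'.verts := hle.1 (Or.inr rfl)
    have hvsub : H'.verts ⊆ C ∪ {c} := by
      intro d hd
      by_contra hdC
      have hdc : d ≠ c := fun he => hdC (Or.inr (by simp [he]))
      have hu0H' : u0 ∈ H'.verts := hle.1 (Or.inl hu0C)
      have hpre := hdel' c hcH'
      have hsr := precon_iff_sreach.mp hpre u0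
        (by rw [Subgraph.deleteVerts_verts]; exact ⟨hu0H', by simpa using hu0⟩) d
        (by rw [Subgraph.deleteVerts_verts]; exact ⟨hd, by simpa using hdc⟩)
      obtain ⟨h1, h2, hr⟩ := hsr
      obtain ⟨pw⟩ := hr
      obtain ⟨q, hqs, hqd⟩ := coe_walk_transfer pw
      have hcq : c ∉ q.support := by
        intro hh
        rw [hqs] at hh
        obtain ⟨t, ht, hteq⟩ := List.mem_map.mp hh
        have h3 : t.val ∈ H'.verts \ {c} := by
          have := t.property
          simpa [Subgraph.deleteVerts_verts] using this
        exact (by simpa using h3.2 : t.val ≠ c) hteq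
      exact hdC (Or.inl (RA.symm ⟨q, hcq⟩))
    ext a b
    · constructor
      · intro hh
        exact hvsub hh
      · intro hh
        exact hle.1 hh
    · constructor
      · intro hh
        exact ⟨hvsub (H'.edge_vert hh), hvsub (H'.edge_vert hh.symm),
          by simpa using H'.adj_sub hh⟩
      · intro hh
        exact hle.2 hh
  refine ⟨⟨htcc, hmax⟩, c, ⟨Or.inr rfl, hc⟩, ?_⟩
  rintro y ⟨hyB, hycut⟩
  rcases hyB with hyC | hyc
  · exact absurd hycut (hnocut y hyC)
  · exact hyc

lemma leaf_interior [Finite V] (hGc : G.Connected) {H : G.Subgraph}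
    (hL : IsLeafBlock G H) : ∃ u ∈ H.verts, ¬ IsCutVertex G u := by
  obtain ⟨hB, w0, ⟨hw0H, hw0c⟩, huniq⟩ := hL
  obtain ⟨y, hy⟩ := exists_ne_of_cut hGc hw0c
  obtain ⟨u, huH, huw0⟩ := block_two_verts hGc hB hw0H hy
  exact ⟨u, huH, fun hcut => huw0 (huniq u ⟨huH, hcut⟩)⟩

lemma walk_stays {G1 G2 : SimpleGraph V} (h : G1 ≤ G2) {H : G2.Subgraph} {v : V}
    (hF1 : ∀ x ∈ H.verts, x ≠ v → ∀ w', G2.Adj x w' → w' ∈ H.verts) :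
    ∀ {s t : V} (q : G1.Walk s t), s ∈ H.verts → s ≠ v → v ∉ q.support →
      ∀ b ∈ q.support, b ∈ H.verts := by
  intro s t q
  induction q with
  | nil =>
    intro hs hsv hv b hb
    simp only [Walk.support_nil, List.mem_singleton] at hb
    rwa [hb]
  | @cons a a' t hadj rest ih =>
    intro hs hsv hv b hb
    have ha' : a' ∈ H.verts := hF1 a hs hsv a' (h hadj)
    have ha'v : a' ≠ v := by
      intro he
      exact hv (by rw [Walk.support_cons, ← he]
                   exact List.mem_cons_of_mem _ rest.start_mem_support)
    have hvrest : v ∉ rest.support := fun hh => hv (by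
      rw [Walk.support_cons]; exact List.mem_cons_of_mem _ hh)
    rcases (by simpa [Walk.support_cons] using hb : b = a ∨ b ∈ rest.support) with rfl | hbr
    · exact hs
    · exact ih ha' ha'v hvrest b hbr

lemma key_lemma [Finite V] {G1 G2 : SimpleGraph V} (h : G1 ≤ G2)
    (h1c : G1.Connected) (h2c : G2.Connected) {H : G2.Subgraph}
    (hL : IsLeafBlock G2 H) :
    ∃ B : G1.Subgraph, IsLeafBlock G1 B ∧ B.verts ⊆ H.verts := by
  obtain ⟨hB, v, ⟨hvH, hvcut⟩, huniq⟩ := hL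
  obtain ⟨yy, hyy⟩ := exists_ne_of_cut h2c hvcut
  obtain ⟨u, huH, huv⟩ := block_two_verts h2c hB hvH hyy
  have hF1 : ∀ x ∈ H.verts, x ≠ v → ∀ w', G2.Adj x w' → w' ∈ H.verts := by
    intro x hx hxv w' hadj
    have hxcut : ¬ IsCutVertex G2 x := fun hcut => hxv (huniq x ⟨hx, hcut⟩)
    exact leaf_interior_closed h2c hB hvH hx hxv hxcut hadj
  have hvcut1 : IsCutVertex G1 v := cut_mono h h1c h2c hvcut
  have hCsub : CompAvoid G1 v u ⊆ H.verts \ {v} := by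
    intro x hx
    obtain ⟨p, hvp⟩ := hx
    have hvrev : v ∉ p.reverse.support := by
      rw [Walk.support_reverse]; simpa using hvp
    have hstay := walk_stays h hF1 p.reverse huH huv hvrev
    have hxs : x ∈ p.reverse.support := p.reverse.end_mem_support
    refine ⟨hstay x hxs, ?_⟩
    simp only [Set.mem_singleton_iff]
    intro he
    exact hvrev (he ▸ hxs)
  obtain ⟨c, u0, hc, hu0, hPP, hnocut⟩ :=
    exists_min_pair h1c (H.verts \ {v}) hvcut1 huv hCsub
  refine ⟨_, leaf_block_of_min_pair h1c hc hu0 hnocut, ?_⟩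
  obtain ⟨x1, hx1C, hcx1⟩ := comp_neighbor h1c hu0
  have hx1 := hPP hx1C
  have hcH : c ∈ H.verts :=
    hF1 x1 hx1.1 (by simpa using hx1.2) c (h hcx1).symm
  intro t ht
  rcases (ht : t ∈ CompAvoid G1 c u0 ∪ {c}) with htC | htc
  · exact (hPP htC).1
  · rw [Set.mem_singleton_iff.mp htc]
    exact hcH

lemma exists_leaf_block' [Finite V] (hGc : G.Connected) (hn : ¬ TwoConnConv G) :
    ∃ H : G.Subgraph, IsLeafBlock G H := by
  have hcut : ∃ v, IsCutVertex G v := by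
    by_contra hno
    push_neg at hno
    exact hn ⟨hGc, fun v => hno v⟩
  obtain ⟨c, hc⟩ := hcut
  obtain ⟨u0, hu0⟩ := exists_ne_of_cut hGc hc
  obtain ⟨c', u0', hc', hu0', _, hnocut⟩ :=
    exists_min_pair hGc Set.univ hc hu0 (Set.subset_univ _)
  exact ⟨_, leaf_block_of_min_pair hGc hc' hu0' hnocut⟩

end helpers

theorem stmt11 {V : Type*} [Fintype V] (G1 G2 : SimpleGraph V)
    (pos : V → EuclideanSpace ℝ (Fin 2)) (h : G1 ≤ G2)
    (h1c : G1.Connected) (h2c : G2.Connected)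
    (h1n : ¬ TwoConnConv G1) (h2n : ¬ TwoConnConv G2) :
    scsdRadius G2 pos ≤ scsdRadius G1 pos := by
  classical
  set s1 : Set ℝ := {r : ℝ | ∃ z : EuclideanSpace ℝ (Fin 2), ∀ H : G1.Subgraph,
    IsLeafBlock G1 H → ∃ y ∈ H.verts, ¬ IsCutVertex G1 y ∧ dist z (pos y) ≤ r} with hs1
  set s2 : Set ℝ := {r : ℝ | ∃ z : EuclideanSpace ℝ (Fin 2), ∀ H : G2.Subgraph,
    IsLeafBlock G2 H → ∃ y ∈ H.verts, ¬ IsCutVertex G2 y ∧ dist z (pos y) ≤ r} with hs2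
  have hgoal : scsdRadius G2 pos = sInf s2 := rfl
  have hgoal1 : scsdRadius G1 pos = sInf s1 := rfl
  rw [hgoal, hgoal1]
  have hsub : s1 ⊆ s2 := by
    rintro r ⟨z, hz⟩
    refine ⟨z, fun H hL => ?_⟩
    obtain ⟨B, hBL, hBsub⟩ := key_lemma h h1c h2c hL
    obtain ⟨y, hyB, hycut, hyd⟩ := hz B hBL
    exact ⟨y, hBsub hyB, fun hcut2 => hycut (cut_mono h h1c h2c hcut2), hyd⟩
  have hne1 : s1.Nonempty := by
    refine ⟨∑ y : V, dist (0 : EuclideanSpace ℝ (Fin 2)) (pos y),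
      (0 : EuclideanSpace ℝ (Fin 2)), ?_⟩
    intro H hL
    obtain ⟨u, huH, hucut⟩ := leaf_interior h1c hL
    exact ⟨u, huH, hucut,
      Finset.single_le_sum (fun i _ => dist_nonneg) (Finset.mem_univ u)⟩
  have hpos1 : ∀ r ∈ s1, (0 : ℝ) ≤ r := by
    rintro r ⟨z, hz⟩
    obtain ⟨H0, hH0⟩ := exists_leaf_block' h1c h1n
    obtain ⟨y, _, _, hyd⟩ := hz H0 hH0
    exact le_trans dist_nonneg hyd
  by_cases hbdd : BddBelow s2
  · exact csInf_le_csInf hbdd hne1 hsub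
  · rw [Real.sInf_of_not_bddBelow hbdd]
    exact Real.sInf_nonneg hpos1
end
end

section
/- In a 2-connected graph N with at least 4 vertices, let v be a vertex with two critical incident edges vx1 and vx2. Then any two paths P12 (from x1 to x2 avoiding v) and P23 (from x2 to a third neighbour x3 of v, avoiding v) are not internally disjoint, provided vx2 is critical. -/
open SimpleGraph Sum

noncomputable section

/- auxiliary -/
namespace Stmt12Aux

variable {V : Type*}

/-- inclusion hom from an induced subgraph -/
@[reducible] def incl (G : SimpleGraph V) (S : Set V) : G.induce S →g G :=
  ⟨Subtype.val, fun h => h⟩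

lemma reach_induce_of_walk {G : SimpleGraph V} {S : Set V} {a b : V}
    (p : G.Walk a b) (hp : ∀ x ∈ p.support, x ∈ S) :
    (G.induce S).Reachable ⟨a, hp a p.start_mem_support⟩ ⟨b, hp b p.end_mem_support⟩ := by
  induction p with
  | nil => exact Reachable.refl _
  | @cons a c b h q ih =>
    have hc : c ∈ S := hp c (by simp)
    have ha : a ∈ S := hp a (by simp)
    have h1 : (G.induce S).Adj ⟨a, ha⟩ ⟨c, hc⟩ := h
    exact (h1.reachable).trans (ih fun x hx => hp x (by simp [hx]))

lemma reach_aux {G : SimpleGraph V} {S : Set V} {v w : V}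
    (q : (G.deleteEdges {s(v, w)}).Walk v w) (hq : ∀ x ∈ q.support, x ∈ S)
    {a b : V} (p : G.Walk a b) (hp : ∀ x ∈ p.support, x ∈ S) :
    ((G.deleteEdges {s(v, w)}).induce S).Reachable
      ⟨a, hp a p.start_mem_support⟩ ⟨b, hp b p.end_mem_support⟩ := by
  induction p with
  | nil => exact Reachable.refl _
  | @cons a c b h p ih =>
    have hc : c ∈ S := hp c (by simp)
    have ha : a ∈ S := hp a (by simp)
    refine Reachable.trans ?_ (ih fun x hx => hp x (by simp [hx]))
    by_cases he : s(a, c) = s(v, w)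
    · have base := reach_induce_of_walk q hq
      rw [Sym2.eq_iff] at he
      rcases he with ⟨rfl, rfl⟩ | ⟨rfl, rfl⟩
      · exact base
      · exact base.symm
    · have h1 : ((G.deleteEdges {s(v, w)}).induce S).Adj ⟨a, ha⟩ ⟨c, hc⟩ := by
        simp only [comap_adj, Function.Embedding.coe_subtype, deleteEdges_adj,
          Set.mem_singleton_iff]
        exact ⟨h, he⟩
      exact h1.reachable

end Stmt12Aux

theorem stmt12 {V : Type*} [Fintype V] (N : SimpleGraph V)
    (hN : StrictTwoConnected N) (hcard : 4 ≤ Nat.card V)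
    (v x1 x2 x3 : V) (h1 : N.Adj v x1) (h2 : N.Adj v x2) (h3 : N.Adj v x3)
    (h12 : x1 ≠ x2) (h13 : x1 ≠ x3) (h23 : x2 ≠ x3)
    (hc1 : IsCriticalEdge N s(v, x1)) (hc2 : IsCriticalEdge N s(v, x2))
    (P12 : (N.induce {w | w ≠ v}).Walk ⟨x1, h1.ne'⟩ ⟨x2, h2.ne'⟩)
    (P23 : (N.induce {w | w ≠ v}).Walk ⟨x2, h2.ne'⟩ ⟨x3, h3.ne'⟩)
    (hp12 : P12.IsPath) (hp23 : P23.IsPath) :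
    ∃ w : {w : V // w ≠ v}, w ∈ P12.support ∧ w ∈ P23.support ∧ (w : V) ≠ x2 := by
  classical
  by_contra hcon
  push_neg at hcon
  apply hc2.2
  refine ⟨le_trans (by norm_num) hcard, ?_⟩
  intro u
  -- mapped walks in N
  let f := Stmt12Aux.incl N {w : V | w ≠ v}
  have sup12 : ∀ x : V, x ∈ (P12.map f).support ↔ ∃ h : x ≠ v, (⟨x, h⟩ : {w : V // w ≠ v}) ∈ P12.support := by
    intro x
    rw [Walk.support_map]
    constructor
    · intro hx
      rw [List.mem_map] at hx
      obtain ⟨y, hy, rfl⟩ := hx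
      exact ⟨y.2, hy⟩
    · rintro ⟨h, hy⟩
      exact List.mem_map.2 ⟨_, hy, rfl⟩
  have sup23 : ∀ x : V, x ∈ (P23.map f).support ↔ ∃ h : x ≠ v, (⟨x, h⟩ : {w : V // w ≠ v}) ∈ P23.support := by
    intro x
    rw [Walk.support_map]
    constructor
    · intro hx
      rw [List.mem_map] at hx
      obtain ⟨y, hy, rfl⟩ := hx
      exact ⟨y.2, hy⟩
    · rintro ⟨h, hy⟩
      exact List.mem_map.2 ⟨_, hy, rfl⟩
  have hvx2 : v ≠ x2 := h2.ne
  -- the two candidate detours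
  have hQ1e : ∀ e' ∈ (Walk.cons h1 (P12.map f) : N.Walk v x2).edges,
      e' ∉ ({s(v, x2)} : Set (Sym2 V)) := by
    intro e' he'
    simp only [Walk.edges_cons, List.mem_cons] at he'
    simp only [Set.mem_singleton_iff]
    rcases he' with rfl | he'
    · rw [Sym2.eq_iff]
      push_neg
      exact ⟨fun _ => h12, fun hv => absurd hv hvx2⟩
    · intro hEq
      subst hEq
      have hv := Walk.fst_mem_support_of_mem_edges _ he'
      rw [sup12] at hv
      obtain ⟨h, _⟩ := hv
      exact h rfl
  have hQ2e : ∀ e' ∈ (Walk.cons h3 (P23.map f).reverse : N.Walk v x2).edges,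
      e' ∉ ({s(v, x2)} : Set (Sym2 V)) := by
    intro e' he'
    simp only [Walk.edges_cons, List.mem_cons] at he'
    simp only [Set.mem_singleton_iff]
    rcases he' with rfl | he'
    · rw [Sym2.eq_iff]
      push_neg
      exact ⟨fun _ => Ne.symm h23, fun hv => absurd hv hvx2⟩
    · intro hEq
      subst hEq
      have hv := Walk.fst_mem_support_of_mem_edges _ he'
      rw [Walk.support_reverse, List.mem_reverse, sup23] at hv
      obtain ⟨h, _⟩ := hv
      exact h rfl
  by_cases huv : u = v
  · subst huv
    have hEq : (N.deleteEdges {s(u, x2)}).induce {w : V | w ≠ u} = N.induce {w : V | w ≠ u} := by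
      ext a b
      simp only [comap_adj, Function.Embedding.coe_subtype, deleteEdges_adj,
        Set.mem_singleton_iff]
      constructor
      · exact And.left
      · intro h
        refine ⟨h, fun hE => ?_⟩
        rw [Sym2.eq_iff] at hE
        rcases hE with ⟨ha, _⟩ | ⟨_, hb⟩
        · exact a.2 ha
        · exact b.2 hb
    rw [hEq]
    exact hN.2 u
  by_cases hux2 : u = x2
  · subst hux2
    have hEq : (N.deleteEdges {s(v, u)}).induce {w : V | w ≠ u} = N.induce {w : V | w ≠ u} := by
      ext a b
      simp only [comap_adj, Function.Embedding.coe_subtype, deleteEdges_adj,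
        Set.mem_singleton_iff]
      constructor
      · exact And.left
      · intro h
        refine ⟨h, fun hE => ?_⟩
        rw [Sym2.eq_iff] at hE
        rcases hE with ⟨_, hb⟩ | ⟨ha, _⟩
        · exact b.2 hb
        · exact a.2 ha
    rw [hEq]
    exact hN.2 u
  -- main case : u ≠ v, u ≠ x2
  have hdet : ∃ Q : (N.deleteEdges {s(v, x2)}).Walk v x2,
      ∀ x ∈ Q.support, x ∈ {w : V | w ≠ u} := by
    by_cases hu12 : (⟨u, huv⟩ : {w : V // w ≠ v}) ∈ P12.support
    · have hu23 : (⟨u, huv⟩ : {w : V // w ≠ v}) ∉ P23.support := by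
        intro h'
        exact hux2 (hcon ⟨u, huv⟩ hu12 h')
      refine ⟨(Walk.cons h3 (P23.map f).reverse).toDeleteEdges _ hQ2e, ?_⟩
      intro x hx
      rw [Walk.support_transfer] at hx
      simp only [Walk.support_cons, List.mem_cons, Walk.support_reverse,
        List.mem_reverse] at hx
      rcases hx with rfl | hx
      · exact Ne.symm huv
      · rw [sup23] at hx
        obtain ⟨h, hmem⟩ := hx
        intro hxu
        subst hxu
        exact hu23 hmem
    · refine ⟨(Walk.cons h1 (P12.map f)).toDeleteEdges _ hQ1e, ?_⟩
      intro x hx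
      rw [Walk.support_transfer] at hx
      simp only [Walk.support_cons, List.mem_cons] at hx
      rcases hx with rfl | hx
      · exact Ne.symm huv
      · rw [sup12] at hx
        obtain ⟨h, hmem⟩ := hx
        intro hxu
        subst hxu
        exact hu12 hmem
  obtain ⟨Q, hQ⟩ := hdet
  haveI : Nonempty {w : V // w ∈ {w : V | w ≠ u}} := ⟨⟨v, Ne.symm huv⟩⟩
  refine Connected.mk ?_
  intro a b
  refine Reachable.elim ((hN.2 u).preconnected a b) (fun r => ?_)
  have hpS : ∀ x ∈ (r.map (Stmt12Aux.incl N {w : V | w ≠ u})).support, x ∈ {w : V | w ≠ u} := by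
    intro x hx
    rw [Walk.support_map, List.mem_map] at hx
    obtain ⟨y, _, rfl⟩ := hx
    exact y.2
  exact Stmt12Aux.reach_aux Q hQ (r.map (Stmt12Aux.incl N {w : V | w ≠ u})) hpS
end
end

section
/- Let G be a connected graph lying inside a 2-connected graph G⁺ = G plus two Steiner vertices s1, s2 and Steiner edges, let E0 be a base edge-set and M0 = G⁺ minus all Steiner edges not in E0. If M0 is not 2-connected and the blocks of M0 along its block cut-vertex path are Y1, ..., Yp with s1 in the interior of Y1 and s2 in the interior of Yp, then the set E0' of Steiner edges of G⁺ outside E0 is nonempty; in particular, for each cut-vertex τi of M0 separating B = ∪_{j≥i+1} B_j from the rest, G⁺ contains a Steiner edge joining the two sides. -/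
open SimpleGraph Sum

noncomputable section

private lemma cross_lemma {W : Type*} {A B : SimpleGraph W} {a : W} :
    ∀ {y b : W}, B.Walk y b → A.Reachable a y → ¬ A.Reachable a b →
      ∃ u v, B.Adj u v ∧ A.Reachable a u ∧ ¬ A.Reachable a v := by
  intro y b w
  induction w with
  | nil => exact fun hy hb => absurd hy hb
  | @cons y c b h p ih =>
    intro hy hb
    by_cases hc : A.Reachable a c
    · exact ih hc hb
    · exact ⟨y, c, h, hy, hc⟩

private lemma conn_card_one {W : Type*} [Finite W] {G : SimpleGraph W}
    (h : G.Connected) : numComponents G = 1 := by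
  rw [numComponents, Nat.card_eq_one_iff_unique]
  constructor
  · exact ⟨fun c d => SimpleGraph.ConnectedComponent.ind₂
      (fun u v => SimpleGraph.ConnectedComponent.sound (h.preconnected u v)) c d⟩
  · obtain ⟨w⟩ := h.nonempty
    exact ⟨G.connectedComponentMk w⟩

theorem stmt16 {V : Type*} [Fintype V] (G : SimpleGraph V) (hG : G.Connected)
    (Gplus M0 : SimpleGraph (V ⊕ Fin 2))
    -- `Gplus` is `G` together with two Steiner vertices and Steiner edges
    (hGp : ∀ a b : V, Gplus.Adj (inl a) (inl b) ↔ G.Adj a b)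
    (h2 : TwoConnConv Gplus)
    -- `M0` is `Gplus` minus some Steiner edges (all edges of `G` are retained)
    (hle : M0 ≤ Gplus)
    (hM0G : ∀ a b : V, M0.Adj (inl a) (inl b) ↔ G.Adj a b)
    (hM0c : M0.Connected) (hM0n : ¬ TwoConnConv M0) :
    -- the set of Steiner edges of `Gplus` outside `M0` is nonempty, and for each
    -- cut-vertex `x` of `M0` there is such an edge joining the two sides of `x`
    (∃ a b, Gplus.Adj a b ∧ ¬ M0.Adj a b) ∧
    ∀ x, IsCutVertex M0 x →
      ∃ (a b : V ⊕ Fin 2) (ha : a ≠ x) (hb : b ≠ x),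
        Gplus.Adj a b ∧ ¬ M0.Adj a b ∧
        ¬ (M0.induce {w | w ≠ x}).Reachable ⟨a, ha⟩ ⟨b, hb⟩ := by
  classical
  have key : ∀ x, IsCutVertex M0 x →
      ∃ (a b : V ⊕ Fin 2) (ha : a ≠ x) (hb : b ≠ x),
        Gplus.Adj a b ∧ ¬ M0.Adj a b ∧
        ¬ (M0.induce {w | w ≠ x}).Reachable ⟨a, ha⟩ ⟨b, hb⟩ := by
    intro x hx
    set S : Set (V ⊕ Fin 2) := {w | w ≠ x} with hS
    have hM0one : numComponents M0 = 1 := conn_card_one hM0c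
    have hxlt : 1 < numComponents (M0.induce S) := hM0one ▸ hx
    have hnontriv : Nontrivial (M0.induce S).ConnectedComponent := by
      rw [numComponents, Nat.card_eq_fintype_card] at hxlt
      exact Fintype.one_lt_card_iff_nontrivial.mp hxlt
    obtain ⟨c, d, hcd⟩ := hnontriv
    obtain ⟨a, rfl⟩ := c.exists_rep
    obtain ⟨b, rfl⟩ := d.exists_rep
    have hab : ¬ (M0.induce S).Reachable a b := fun h =>
      hcd (SimpleGraph.ConnectedComponent.sound h)
    -- Gplus minus x is connected
    have hGpx : ¬ IsCutVertex Gplus x := h2.2 x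
    have hGpone : numComponents Gplus = 1 := conn_card_one h2.1
    have hle1 : numComponents (Gplus.induce S) ≤ 1 := by
      by_contra hgt
      exact hGpx (by rw [IsCutVertex, hGpone]; exact Nat.lt_of_not_le hgt)
    have hsub : Subsingleton (Gplus.induce S).ConnectedComponent := by
      rw [numComponents, Nat.card_eq_fintype_card] at hle1
      exact Fintype.card_le_one_iff_subsingleton.mp hle1
    have hreachB : (Gplus.induce S).Reachable a b :=
      SimpleGraph.ConnectedComponent.exact
        (Subsingleton.elim ((Gplus.induce S).connectedComponentMk a)
          ((Gplus.induce S).connectedComponentMk b))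
    obtain ⟨w⟩ := hreachB
    obtain ⟨u, v, hBuv, hau, hnav⟩ :=
      cross_lemma (A := M0.induce S) w (SimpleGraph.Reachable.refl a) hab
    have hnuv : ¬ (M0.induce S).Reachable u v := fun h => hnav (hau.trans h)
    have hM0uv : ¬ M0.Adj ↑u ↑v := fun h => hnuv (SimpleGraph.Adj.reachable h)
    exact ⟨↑u, ↑v, u.2, v.2, hBuv, hM0uv, hnuv⟩
  refine ⟨?_, key⟩
  obtain ⟨x, hx⟩ : ∃ x, IsCutVertex M0 x := by
    by_contra h
    push_neg at h
    exact hM0n ⟨hM0c, h⟩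
  obtain ⟨a, b, _, _, hadj, hnadj, _⟩ := key x hx
  exact ⟨a, b, hadj, hnadj⟩
end
end

section
/- Let G be a connected graph with block cut-vertex path structure M0 = Y1, ..., Yp (blocks in path order, cut-vertices τ1, ..., τ_{p-1}), with s1 in Y1* and s2 in Yp*, and suppose M0 is connected. If M is obtained from M0 by adding two edges e1 from s1 to a vertex of B_i and e2 from s2 to a vertex of ∪_{j ≤ i} B_j - τ_i, for some 1 < i < p, then M is 2-connected. -/
open SimpleGraph Sum

noncomputable section

private lemma aux_subsingleton_cc {V : Type*} {G : SimpleGraph V} (h : G.Preconnected) :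
    Subsingleton G.ConnectedComponent :=
  ⟨fun a b => ConnectedComponent.ind₂ (fun u v => ConnectedComponent.eq.mpr (h u v)) a b⟩

private lemma aux_numComp_eq_one {V : Type*} {G : SimpleGraph V} (h : G.Connected) :
    numComponents G = 1 :=
  Nat.card_eq_one_iff_unique.mpr
    ⟨aux_subsingleton_cc h.preconnected, h.nonempty.map G.connectedComponentMk⟩

private lemma aux_numComp_le_one {V : Type*} {G : SimpleGraph V} (h : G.Preconnected) :
    numComponents G ≤ 1 := by
  rcases isEmpty_or_nonempty G.ConnectedComponent with he | hne
  · simp [numComponents, Nat.card_of_isEmpty]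
  · exact le_of_eq (Nat.card_eq_one_iff_unique.mpr ⟨aux_subsingleton_cc h, hne⟩)

private lemma aux_precon_of_le_one {V : Type*} [Finite V] {G : SimpleGraph V}
    (h : numComponents G ≤ 1) : G.Preconnected := by
  intro a b
  rcases subsingleton_or_nontrivial G.ConnectedComponent with hs | hn
  · exact ConnectedComponent.eq.mp (hs.elim _ _)
  · exfalso
    have := Finite.one_lt_card_iff_nontrivial.mpr hn
    unfold numComponents at h
    omega

private lemma aux_not_cut {V : Type*} [Finite V] {G : SimpleGraph V} (hG : G.Connected) (v : V)
    (h : (G.induce {w | w ≠ v}).Preconnected) : ¬ IsCutVertex G v := by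
  unfold IsCutVertex
  rw [aux_numComp_eq_one hG]
  exact not_lt.mpr (aux_numComp_le_one h)

private lemma aux_reach_mono {V : Type*} {G G' : SimpleGraph V} (h : G ≤ G') (s : Set V)
    {a b : ↥s} (hr : (G.induce s).Reachable a b) : (G'.induce s).Reachable a b :=
  hr.map (⟨id, fun hadj => h hadj⟩ : G.induce s →g G'.induce s)

private lemma aux_piece {V : Type*} [Finite V] {G : SimpleGraph V} {H : G.Subgraph}
    (hH : TwoConnConv H.coe) (v : V) {x y : V} (hx : x ∈ H.verts) (hy : y ∈ H.verts)
    (hxv : x ≠ v) (hyv : y ≠ v) :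
    (G.induce {z | z ≠ v}).Reachable ⟨x, hxv⟩ ⟨y, hyv⟩ := by
  by_cases hv : v ∈ H.verts
  · have hnc := hH.2 ⟨v, hv⟩
    unfold IsCutVertex at hnc
    rw [aux_numComp_eq_one hH.1] at hnc
    have hpre : (H.coe.induce {w | w ≠ (⟨v, hv⟩ : ↥H.verts)}).Preconnected :=
      aux_precon_of_le_one (not_lt.mp hnc)
    have hxv' : (⟨x, hx⟩ : ↥H.verts) ≠ ⟨v, hv⟩ := fun hEq => hxv (congrArg Subtype.val hEq)
    have hyv' : (⟨y, hy⟩ : ↥H.verts) ≠ ⟨v, hv⟩ := fun hEq => hyv (congrArg Subtype.val hEq)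
    have hr := hpre ⟨⟨x, hx⟩, hxv'⟩ ⟨⟨y, hy⟩, hyv'⟩
    exact hr.map (⟨fun z => ⟨z.1.1, fun hEq => z.2 (Subtype.ext hEq)⟩,
      fun hadj => H.adj_sub hadj⟩ :
      (H.coe.induce {w | w ≠ (⟨v, hv⟩ : ↥H.verts)}) →g (G.induce {z | z ≠ v}))
  · have hr := hH.1.preconnected ⟨x, hx⟩ ⟨y, hy⟩
    exact hr.map (⟨fun z => ⟨z.1, fun hEq => hv (hEq ▸ z.2)⟩, fun hadj => H.adj_sub hadj⟩ :
      H.coe →g (G.induce {z | z ≠ v}))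

private instance aux_subgraph_finite {V : Type*} [Finite V] {G : SimpleGraph V} :
    Finite G.Subgraph :=
  Finite.of_injective (fun H => (H.verts, H.Adj)) (by
    intro H1 H2 h
    rw [Prod.ext_iff] at h
    exact SimpleGraph.Subgraph.ext h.1 h.2)

private lemma aux_exists_block {V : Type*} [Finite V] {G : SimpleGraph V} (H0 : G.Subgraph)
    (h : TwoConnConv H0.coe) :
    ∃ H, H0 ≤ H ∧ (TwoConnConv H.coe ∧ ∀ H' : G.Subgraph, H ≤ H' → TwoConnConv H'.coe → H' = H) := by
  obtain ⟨H, ⟨hle, hH⟩, hmax⟩ := Set.Finite.exists_maximalFor id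
    {H' | H0 ≤ H' ∧ TwoConnConv H'.coe} (Set.toFinite _) ⟨H0, le_refl _, h⟩
  exact ⟨H, hle, hH, fun H'' h1 h2 => le_antisymm (hmax ⟨hle.trans h1, h2⟩ h1) h1⟩

private lemma aux_cc_isEmpty {V : Type*} {G : SimpleGraph V} [IsEmpty V] :
    IsEmpty G.ConnectedComponent :=
  ⟨fun c => c.ind fun v => isEmptyElim v⟩

private lemma aux_singleton_tcc {V : Type*} {G : SimpleGraph V} (x : V) :
    TwoConnConv (G.singletonSubgraph x).coe := by
  constructor
  · exact SimpleGraph.Subgraph.connected_iff'.mp (SimpleGraph.Subgraph.singletonSubgraph_connected (G := G))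
  · intro v hcut
    unfold IsCutVertex at hcut
    have he : IsEmpty ↥{w : ↥(G.singletonSubgraph x).verts | w ≠ v} := by
      constructor
      rintro ⟨⟨z, hz⟩, hzv⟩
      apply hzv
      apply Subtype.ext
      have hz' : z = x := hz
      have hv' : v.1 = x := v.2
      simp only [hz', hv']
    haveI := he
    haveI : IsEmpty ((G.singletonSubgraph x).coe.induce {w | w ≠ v}).ConnectedComponent :=
      aux_cc_isEmpty
    have h0 : numComponents ((G.singletonSubgraph x).coe.induce {w | w ≠ v}) = 0 :=
      Nat.card_of_isEmpty
    rw [h0] at hcut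
    omega

private lemma aux_k2_tcc {V : Type*} {G : SimpleGraph V} {a b : V} (hab : G.Adj a b) :
    TwoConnConv (G.subgraphOfAdj hab).coe := by
  constructor
  · exact SimpleGraph.Subgraph.connected_iff'.mp (SimpleGraph.Subgraph.subgraphOfAdj_connected hab)
  · intro v hcut
    unfold IsCutVertex at hcut
    have hsub : Subsingleton ↥{w : ↥(G.subgraphOfAdj hab).verts | w ≠ v} := by
      constructor
      rintro ⟨⟨z1, hz1⟩, hz1v⟩ ⟨⟨z2, hz2⟩, hz2v⟩
      have hz1' : z1 ≠ v.1 := fun h => hz1v (Subtype.ext h)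
      have hz2' : z2 ≠ v.1 := fun h => hz2v (Subtype.ext h)
      have hv' : v.1 = a ∨ v.1 = b := v.2
      have h1 : z1 = a ∨ z1 = b := hz1
      have h2 : z2 = a ∨ z2 = b := hz2
      apply Subtype.ext; apply Subtype.ext
      show z1 = z2
      rcases hv' with hv' | hv' <;> rcases h1 with rfl | rfl <;> rcases h2 with rfl | rfl <;>
        simp_all
    have hpre : ((G.subgraphOfAdj hab).coe.induce {w | w ≠ v}).Preconnected := by
      intro x y
      rw [hsub.elim x y]
    have h1 : numComponents (G.subgraphOfAdj hab).coe = 1 :=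
      aux_numComp_eq_one (SimpleGraph.Subgraph.connected_iff'.mp
        (SimpleGraph.Subgraph.subgraphOfAdj_connected hab))
    have h2 := aux_numComp_le_one hpre
    omega

private lemma aux_closed_walk {V : Type*} {G : SimpleGraph V} {s : Set V} (S : Set V)
    (hcl : ∀ a b : ↥s, (G.induce s).Adj a b → a.1 ∈ S → b.1 ∈ S)
    {x y : ↥s} (h : (G.induce s).Reachable x y) (hx : x.1 ∈ S) : y.1 ∈ S := by
  obtain ⟨wlk⟩ := h
  induction wlk with
  | nil => exact hx
  | cons hadj _ ih => exact ih (hcl _ _ hadj hx)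


theorem stmt17 {V : Type*} [Fintype V] (M0 : SimpleGraph V) (hM0 : M0.Connected)
    -- the block cut-vertex forest of `M0` is a path of blocks `Y 0, ..., Y (p-1)`,
    -- consecutive blocks sharing exactly the cut-vertex `τ j`
    (p : ℕ) (hp : 3 ≤ p) (Y : ℕ → M0.Subgraph) (τ : ℕ → V)
    (hblocks : ∀ j < p, IsBlock M0 (Y j))
    (hall : ∀ H : M0.Subgraph, IsBlock M0 H → ∃ j < p, H = Y j)
    (hpath : ∀ j, j + 1 < p → (Y j).verts ∩ (Y (j + 1)).verts = {τ j})
    (hdisj : ∀ j l, j + 1 < l → l < p → (Y j).verts ∩ (Y l).verts = ∅)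
    -- `s1` is interior to the first block and `s2` to the last
    (s1 s2 : V) (hs1 : s1 ∈ (Y 0).verts) (hs1c : ¬ IsCutVertex M0 s1)
    (hs2 : s2 ∈ (Y (p - 1)).verts) (hs2c : ¬ IsCutVertex M0 s2)
    -- `1 < i < p` (in 1-indexed terms); `u ∈ B i` and `w ∈ (⋃_{j ≤ i} B j) - τ i`
    (i : ℕ) (h0i : 0 < i) (hip : i + 1 < p)
    (u w : V) (hu : u ∈ (Y i).verts) (hu' : u ≠ τ (i - 1))
    (hw : ∃ j ≤ i, w ∈ (Y j).verts) (hw' : w ≠ τ i)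
    (hs1u : s1 ≠ u) (hs2w : s2 ≠ w) :
    TwoConnConv (M0 ⊔ fromEdgeSet {s(s1, u), s(s2, w)}) := by
  classical
  obtain ⟨q, rfl⟩ : ∃ q, p = q + 3 := ⟨p - 3, by omega⟩
  have hs2' : s2 ∈ (Y (q + 2)).verts := hs2
  clear hs2
  -- basic structural facts
  have tau_mem : ∀ j, j + 1 < q + 3 → τ j ∈ (Y j).verts ∧ τ j ∈ (Y (j + 1)).verts := by
    intro j hj
    have h := hpath j hj
    have h2 : τ j ∈ (Y j).verts ∩ (Y (j + 1)).verts := by rw [h]; rfl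
    exact ⟨h2.1, h2.2⟩
  have disj : ∀ j l (x : V), j + 1 < l → l < q + 3 →
      x ∈ (Y j).verts → x ∈ (Y l).verts → False := by
    intro j l x h1 h2 hx1 hx2
    have h := hdisj j l h1 h2
    have : x ∈ ((Y j).verts ∩ (Y l).verts) := ⟨hx1, hx2⟩
    rw [h] at this
    exact this
  have tau_ne : ∀ j l, j < l → l + 1 < q + 3 → τ j ≠ τ l := by
    intro j l hjl hl hEq
    exact disj j (l + 1) (τ j) (by omega) hl (tau_mem j (by omega)).1
      (by rw [hEq]; exact (tau_mem l hl).2)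
  have cover : ∀ x : V, ∃ k, k < q + 3 ∧ x ∈ (Y k).verts := by
    intro x
    obtain ⟨H, hle, hblk⟩ := aux_exists_block (M0.singletonSubgraph x) (aux_singleton_tcc x)
    obtain ⟨k, hk, hHY⟩ := hall H hblk
    exact ⟨k, hk, (hHY ▸ hle).1 rfl⟩
  have edge_blk : ∀ a b : V, M0.Adj a b →
      ∃ k, k < q + 3 ∧ a ∈ (Y k).verts ∧ b ∈ (Y k).verts := by
    intro a b hab
    obtain ⟨H, hle, hblk⟩ := aux_exists_block (M0.subgraphOfAdj hab) (aux_k2_tcc hab)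
    obtain ⟨k, hk, hHY⟩ := hall H hblk
    refine ⟨k, hk, ?_, ?_⟩
    · exact (hHY ▸ hle).1 (by simp)
    · exact (hHY ▸ hle).1 (by simp)
  -- the first block has a vertex other than τ 0
  have hxL : ∃ z, z ∈ (Y 0).verts ∧ z ≠ τ 0 := by
    by_contra hcon
    push_neg at hcon
    have hle : Y 0 ≤ Y 1 := by
      constructor
      · intro z hz
        rw [hcon z hz]
        exact (tau_mem 0 (by omega)).2
      · intro a b hadj
        have ha := hcon a ((Y 0).edge_vert hadj)
        have hb := hcon b ((Y 0).edge_vert hadj.symm)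
        exact absurd (ha.trans hb.symm) ((Y 0).adj_sub hadj).ne
    have hEq : Y 1 = Y 0 := (hblocks 0 (by omega)).2 (Y 1) hle (hblocks 1 (by omega)).1
    exact disj 0 2 (τ 1) (by omega) (by omega) (by rw [← hEq]; exact (tau_mem 1 (by omega)).1)
      (tau_mem 1 (by omega)).2
  -- the last block has a vertex other than τ (q+1)
  have hxR : ∃ z, z ∈ (Y (q + 2)).verts ∧ z ≠ τ (q + 1) := by
    by_contra hcon
    push_neg at hcon
    have hle : Y (q + 2) ≤ Y (q + 1) := by
      constructor
      · intro z hz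
        rw [hcon z hz]
        exact (tau_mem (q + 1) (by omega)).1
      · intro a b hadj
        have ha := hcon a ((Y (q + 2)).edge_vert hadj)
        have hb := hcon b ((Y (q + 2)).edge_vert hadj.symm)
        exact absurd (ha.trans hb.symm) ((Y (q + 2)).adj_sub hadj).ne
    have hEq : Y (q + 1) = Y (q + 2) :=
      (hblocks (q + 2) (by omega)).2 (Y (q + 1)) hle (hblocks (q + 1) (by omega)).1
    exact disj q (q + 2) (τ q) (by omega) (by omega) (tau_mem q (by omega)).1
      (by rw [← hEq]; exact (tau_mem q (by omega)).2)
  have hs2τ0 : s2 ≠ τ 0 := by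
    intro h
    exact disj 0 (q + 2) s2 (by omega) (by omega) (by rw [h]; exact (tau_mem 0 (by omega)).1) hs2'
  have hs1τL : s1 ≠ τ (q + 1) := by
    intro h
    exact disj 0 (q + 2) s1 (by omega) (by omega) hs1 (by rw [h]; exact (tau_mem (q+1) (by omega)).2)
  have closure0 : ∀ a b : V, M0.Adj a b → a ∈ (Y 0).verts → a ≠ τ 0 → b ∈ (Y 0).verts := by
    intro a b hab ha hat
    obtain ⟨k, hk, hak, hbk⟩ := edge_blk a b hab
    match k, hk with
    | 0, _ => exact hbk
    | 1, _ =>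
      exfalso
      have h := hpath 0 (by omega)
      have h2 : a ∈ (Y 0).verts ∩ (Y 1).verts := ⟨ha, hak⟩
      rw [h] at h2
      exact hat h2
    | (k + 2), hk => exact absurd hak (fun hak => disj 0 (k + 2) a (by omega) hk ha hak)
  have closureL : ∀ a b : V, M0.Adj a b → a ∈ (Y (q + 2)).verts → a ≠ τ (q + 1) →
      b ∈ (Y (q + 2)).verts := by
    intro a b hab ha hat
    obtain ⟨k, hk, hak, hbk⟩ := edge_blk a b hab
    by_cases h2 : k = q + 2
    · rw [h2] at hbk; exact hbk
    · exfalso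
      by_cases h1 : k = q + 1
      · subst h1
        have h := hpath (q + 1) (by omega)
        have h2 : a ∈ (Y (q + 1)).verts ∩ (Y (q + 1 + 1)).verts := ⟨hak, ha⟩
        rw [h] at h2
        exact hat h2
      · exact disj k (q + 2) a (by omega) (by omega) hak ha
  have cut0 : IsCutVertex M0 (τ 0) := by
    obtain ⟨xL, hxLm, hxLne⟩ := hxL
    have hnr : ¬ (M0.induce {z | z ≠ τ 0}).Reachable ⟨xL, hxLne⟩ ⟨s2, hs2τ0⟩ := by
      intro hr
      have hmem := aux_closed_walk (G := M0) (s := {z | z ≠ τ 0}) ((Y 0).verts)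
        (fun a b hadj hA => closure0 a.1 b.1 hadj hA a.2) hr hxLm
      exact disj 0 (q + 2) s2 (by omega) (by omega) hmem hs2'
    unfold IsCutVertex
    rw [aux_numComp_eq_one hM0]
    unfold numComponents
    exact Finite.one_lt_card_iff_nontrivial.mpr
      ⟨(M0.induce {z | z ≠ τ 0}).connectedComponentMk ⟨xL, hxLne⟩,
       (M0.induce {z | z ≠ τ 0}).connectedComponentMk ⟨s2, hs2τ0⟩,
       fun hEq => hnr (ConnectedComponent.eq.mp hEq)⟩
  have cutL : IsCutVertex M0 (τ (q + 1)) := by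
    obtain ⟨xR, hxRm, hxRne⟩ := hxR
    have hnr : ¬ (M0.induce {z | z ≠ τ (q + 1)}).Reachable ⟨xR, hxRne⟩ ⟨s1, hs1τL⟩ := by
      intro hr
      have hmem := aux_closed_walk (G := M0) (s := {z | z ≠ τ (q + 1)}) ((Y (q + 2)).verts)
        (fun a b hadj hA => closureL a.1 b.1 hadj hA a.2) hr hxRm
      exact disj 0 (q + 2) s1 (by omega) (by omega) hs1 hmem
    unfold IsCutVertex
    rw [aux_numComp_eq_one hM0]
    unfold numComponents
    exact Finite.one_lt_card_iff_nontrivial.mpr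
      ⟨(M0.induce {z | z ≠ τ (q + 1)}).connectedComponentMk ⟨xR, hxRne⟩,
       (M0.induce {z | z ≠ τ (q + 1)}).connectedComponentMk ⟨s1, hs1τL⟩,
       fun hEq => hnr (ConnectedComponent.eq.mp hEq)⟩
  have hs1τ : ∀ j, j + 1 < q + 3 → s1 ≠ τ j := by
    intro j hj
    rcases Nat.eq_zero_or_pos j with rfl | hj0
    · exact fun h => hs1c (by rw [h]; exact cut0)
    · intro h
      exact disj 0 (j + 1) s1 (by omega) hj hs1 (by rw [h]; exact (tau_mem j hj).2)
  have hs2τ : ∀ j, j + 1 < q + 3 → s2 ≠ τ j := by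
    intro j hj
    by_cases hjq : j = q + 1
    · subst hjq
      exact fun h => hs2c (by rw [h]; exact cutL)
    · intro h
      exact disj j (q + 2) s2 (by omega) (by omega) (by rw [h]; exact (tau_mem j hj).1) hs2'
  have hs1s2 : s1 ≠ s2 := by
    intro h
    exact disj 0 (q + 2) s1 (by omega) (by omega) hs1 (by rw [h]; exact hs2')
  -- main part
  have hMle : M0 ≤ M0 ⊔ fromEdgeSet {s(s1, u), s(s2, w)} := le_sup_left
  have hMc : (M0 ⊔ fromEdgeSet {s(s1, u), s(s2, w)}).Connected := hM0.mono hMle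
  refine ⟨hMc, ?_⟩
  intro v
  apply aux_not_cut hMc v
  by_cases hvτ : ∃ m, m + 1 < q + 3 ∧ v = τ m
  · obtain ⟨m, hm, rfl⟩ := hvτ
    have hs1v : s1 ≠ τ m := hs1τ m hm
    have hs2v : s2 ≠ τ m := hs2τ m hm
    have leftchain : ∀ k, k ≤ m → ∀ x (hx : x ∈ (Y k).verts) (hxv : x ≠ τ m),
        (M0.induce {z | z ≠ τ m}).Reachable ⟨x, hxv⟩ ⟨s1, hs1v⟩ := by
      intro k
      induction k with
      | zero =>
        intro _ x hx hxv
        exact aux_piece (hblocks 0 (by omega)).1 (τ m) hx hs1 hxv hs1v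
      | succ k ih =>
        intro hk x hx hxv
        have hk1 : k + 1 < q + 3 := by omega
        have hτm : τ k ≠ τ m := tau_ne k m (by omega) hm
        exact (aux_piece (hblocks (k + 1) hk1).1 (τ m) hx (tau_mem k hk1).2 hxv hτm).trans
          (ih (by omega) (τ k) (tau_mem k hk1).1 hτm)
    have rightchain : ∀ n k, m < k → k < q + 3 → q + 2 - k ≤ n →
        ∀ x (hx : x ∈ (Y k).verts) (hxv : x ≠ τ m),
        (M0.induce {z | z ≠ τ m}).Reachable ⟨x, hxv⟩ ⟨s2, hs2v⟩ := by
      intro n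
      induction n with
      | zero =>
        intro k hmk hk hfuel x hx hxv
        have hkq : k = q + 2 := by omega
        subst hkq
        exact aux_piece (hblocks (q + 2) (by omega)).1 (τ m) hx hs2' hxv hs2v
      | succ n ih =>
        intro k hmk hk hfuel x hx hxv
        by_cases hkq : k = q + 2
        · subst hkq
          exact aux_piece (hblocks (q + 2) (by omega)).1 (τ m) hx hs2' hxv hs2v
        · have hk1 : k + 1 < q + 3 := by omega
          have hτm : τ k ≠ τ m := (tau_ne m k hmk hk1).symm
          exact (aux_piece (hblocks k (by omega)).1 (τ m) hx (tau_mem k hk1).1 hxv hτm).trans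
            (ih (k + 1) (by omega) hk1 (by omega) (τ k) (tau_mem k hk1).2 hτm)
    have hcross : ((M0 ⊔ fromEdgeSet {s(s1, u), s(s2, w)}).induce {z | z ≠ τ m}).Reachable
        ⟨s1, hs1v⟩ ⟨s2, hs2v⟩ := by
      by_cases him : m < i
      · have huv : u ≠ τ m := by
          by_cases h' : m + 1 = i
          · have hi1 : i - 1 = m := by omega
            rw [← hi1]
            exact hu'
          · intro hEq
            exact disj m i u (by omega) (by omega) (by rw [hEq]; exact (tau_mem m hm).1) hu
        have hadj : ((M0 ⊔ fromEdgeSet {s(s1, u), s(s2, w)}).induce {z | z ≠ τ m}).Adj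
            ⟨s1, hs1v⟩ ⟨u, huv⟩ := by
          show (M0 ⊔ fromEdgeSet {s(s1, u), s(s2, w)}).Adj s1 u
          exact (sup_adj _ _ _ _).mpr (Or.inr ((fromEdgeSet_adj _).mpr ⟨Set.mem_insert _ _, hs1u⟩))
        exact hadj.reachable.trans
          (aux_reach_mono hMle _ (rightchain (q + 3) i him (by omega) (by omega) u hu huv))
      · obtain ⟨j', hj'i, hwj'⟩ := hw
        have hwv : w ≠ τ m := by
          by_cases h' : m = i
          · subst h'; exact hw'
          · intro hEq
            exact disj j' (m + 1) w (by omega) (by omega) hwj'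
              (by rw [hEq]; exact (tau_mem m hm).2)
        have hadj : ((M0 ⊔ fromEdgeSet {s(s1, u), s(s2, w)}).induce {z | z ≠ τ m}).Adj
            ⟨s2, hs2v⟩ ⟨w, hwv⟩ := by
          show (M0 ⊔ fromEdgeSet {s(s1, u), s(s2, w)}).Adj s2 w
          exact (sup_adj _ _ _ _).mpr
            (Or.inr ((fromEdgeSet_adj _).mpr ⟨Set.mem_insert_iff.mpr (Or.inr rfl), hs2w⟩))
        exact (hadj.reachable.trans
          (aux_reach_mono hMle _ (leftchain j' (by omega) w hwj' hwv))).symm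
    have hub : ∀ (x : V) (hxv : x ≠ τ m),
        ((M0 ⊔ fromEdgeSet {s(s1, u), s(s2, w)}).induce {z | z ≠ τ m}).Reachable
          ⟨x, hxv⟩ ⟨s1, hs1v⟩ := by
      intro x hxv
      obtain ⟨k, hk, hxk⟩ := cover x
      by_cases hkm : k ≤ m
      · exact aux_reach_mono hMle _ (leftchain k hkm x hxk hxv)
      · exact (aux_reach_mono hMle _
          (rightchain (q + 3) k (by omega) hk (by omega) x hxk hxv)).trans hcross.symm
    intro x y
    exact (hub x.1 x.2).trans (hub y.1 y.2).symm
  · push_neg at hvτ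
    by_cases hvs2 : v = s2
    · have hs1v : s1 ≠ v := fun h => hs1s2 (h.trans hvs2)
      have chain : ∀ k, k < q + 3 → ∀ x (hx : x ∈ (Y k).verts) (hxv : x ≠ v),
          (M0.induce {z | z ≠ v}).Reachable ⟨x, hxv⟩ ⟨s1, hs1v⟩ := by
        intro k
        induction k with
        | zero =>
          intro hk x hx hxv
          exact aux_piece (hblocks 0 (by omega)).1 v hx hs1 hxv hs1v
        | succ k ih =>
          intro hk x hx hxv
          have hτv : τ k ≠ v := fun h => hvτ k hk h.symm
          exact (aux_piece (hblocks (k + 1) hk).1 v hx (tau_mem k hk).2 hxv hτv).trans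
            (ih (by omega) (τ k) (tau_mem k hk).1 hτv)
      intro x y
      obtain ⟨k, hk, hxk⟩ := cover x.1
      obtain ⟨l, hl, hyl⟩ := cover y.1
      exact (aux_reach_mono hMle _ (chain k hk x.1 hxk x.2)).trans
        (aux_reach_mono hMle _ (chain l hl y.1 hyl y.2)).symm
    · have hs2v : s2 ≠ v := fun h => hvs2 h.symm
      have chain : ∀ n k, k < q + 3 → q + 2 - k ≤ n →
          ∀ x (hx : x ∈ (Y k).verts) (hxv : x ≠ v),
          (M0.induce {z | z ≠ v}).Reachable ⟨x, hxv⟩ ⟨s2, hs2v⟩ := by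
        intro n
        induction n with
        | zero =>
          intro k hk hfuel x hx hxv
          have hkq : k = q + 2 := by omega
          subst hkq
          exact aux_piece (hblocks (q + 2) (by omega)).1 v hx hs2' hxv hs2v
        | succ n ih =>
          intro k hk hfuel x hx hxv
          by_cases hkq : k = q + 2
          · subst hkq
            exact aux_piece (hblocks (q + 2) (by omega)).1 v hx hs2' hxv hs2v
          · have hk1 : k + 1 < q + 3 := by omega
            have hτv : τ k ≠ v := fun h => hvτ k hk1 h.symm
            exact (aux_piece (hblocks k (by omega)).1 v hx (tau_mem k hk1).1 hxv hτv).trans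
              (ih (k + 1) hk1 (by omega) (τ k) (tau_mem k hk1).2 hτv)
      intro x y
      obtain ⟨k, hk, hxk⟩ := cover x.1
      obtain ⟨l, hl, hyl⟩ := cover y.1
      exact (aux_reach_mono hMle _ (chain (q + 3) k hk (by omega) x.1 hxk x.2)).trans
        (aux_reach_mono hMle _ (chain (q + 3) l hl (by omega) y.1 hyl y.2)).symm
end
end

section
/- Let M0 be a graph whose block cut-vertex forest is a path of blocks Y1, ..., Yp with s1 an interior vertex of Y1 and s2 an interior vertex of Yp. Then M0 + the edge s1s2 is 2-connected. -/
open SimpleGraph Sum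

noncomputable section

section AuxStmt18
variable {W : Type*}

lemma aux_num_one (H : SimpleGraph W) (h : H.Connected) : numComponents H = 1 := by
  have h1 : Subsingleton H.ConnectedComponent := by
    constructor
    intro a b
    refine a.ind fun x => b.ind fun y => ?_
    exact ConnectedComponent.sound (h.preconnected x y)
  have h2 : Nonempty H.ConnectedComponent := Nonempty.map H.connectedComponentMk h.nonempty
  exact Nat.card_eq_one_iff_unique.mpr ⟨h1, h2⟩

lemma aux_card_le_one (α : Type*) [Subsingleton α] : Nat.card α ≤ 1 := by
  rcases isEmpty_or_nonempty α with h | h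
  · simp [Nat.card_eq_zero_of_infinite]
  · have : Unique α := uniqueOfSubsingleton (Classical.arbitrary α)
    simp [Nat.card_unique]

lemma aux_num_le_one (H : SimpleGraph W) (h : Subsingleton H.ConnectedComponent) :
    numComponents H ≤ 1 := aux_card_le_one _

lemma aux_num_le_one_of_preconn (H : SimpleGraph W) (h : H.Preconnected) :
    numComponents H ≤ 1 := by
  refine aux_num_le_one H ?_
  constructor
  intro a b
  refine a.ind fun x => b.ind fun y => ?_
  exact ConnectedComponent.sound (h x y)

lemma aux_preconn [Finite W] (H : SimpleGraph W) (h : numComponents H ≤ 1) : H.Preconnected := by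
  have : Finite H.ConnectedComponent := Quot.finite _
  have : Subsingleton H.ConnectedComponent := Finite.card_le_one_iff_subsingleton.mp h
  intro a b
  exact (SimpleGraph.ConnectedComponent.eq).mp (Subsingleton.elim _ _)

lemma aux_not_cut_s18 (H : SimpleGraph W) {v : W} (hc : H.Connected)
    (hpre : (H.induce {w | w ≠ v}).Preconnected) : ¬ IsCutVertex H v := by
  unfold IsCutVertex
  rw [aux_num_one H hc]
  have := aux_num_le_one_of_preconn _ hpre
  omega

lemma aux_pre_of_not_cut [Finite W] (H : SimpleGraph W) {v : W} (hc : H.Connected)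
    (h : ¬ IsCutVertex H v) : (H.induce {w | w ≠ v}).Preconnected := by
  unfold IsCutVertex at h
  rw [aux_num_one H hc] at h
  exact aux_preconn _ (by omega)

lemma aux_not_cut_of_subsingleton (H : SimpleGraph W) {v : W} (hc : H.Connected)
    (hs : Subsingleton ↥{w : W | w ≠ v}) : ¬ IsCutVertex H v := by
  unfold IsCutVertex
  rw [aux_num_one H hc]
  have h1 : Subsingleton (H.induce {w | w ≠ v}).ConnectedComponent := by
    constructor
    intro a b
    refine a.ind fun x => b.ind fun y => ?_
    rw [Subsingleton.elim x y]
  have := aux_num_le_one _ h1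
  omega

lemma aux_finite_subgraph {V : Type*} [Finite V] (G : SimpleGraph V) : Finite G.Subgraph := by
  classical
  have : Function.Injective (fun H : G.Subgraph => (H.verts, H.Adj)) := by
    intro H1 H2 h
    simp only [Prod.mk.injEq] at h
    exact Subgraph.ext h.1 h.2
  exact Finite.of_injective _ this

end AuxStmt18

set_option maxHeartbeats 1000000 in
theorem stmt18 {V : Type*} [Fintype V] (M0 : SimpleGraph V)
    (hM0 : M0.Connected) (hM0n : ¬ TwoConnConv M0)
    -- the block cut-vertex forest of `M0` is a path of blocks `Y 0, ..., Y (p-1)`,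
    -- consecutive blocks sharing exactly the cut-vertex `τ j`
    (p : ℕ) (hp : 2 ≤ p) (Y : ℕ → M0.Subgraph) (τ : ℕ → V)
    (hblocks : ∀ j < p, IsBlock M0 (Y j))
    (hall : ∀ H : M0.Subgraph, IsBlock M0 H → ∃ j < p, H = Y j)
    (hpath : ∀ j, j + 1 < p → (Y j).verts ∩ (Y (j + 1)).verts = {τ j})
    (hdisj : ∀ j l, j + 1 < l → l < p → (Y j).verts ∩ (Y l).verts = ∅)
    -- `s1` is interior to the first block and `s2` to the last
    (s1 s2 : V) (hs1 : s1 ∈ (Y 0).verts) (hs1c : ¬ IsCutVertex M0 s1)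
    (hs2 : s2 ∈ (Y (p - 1)).verts) (hs2c : ¬ IsCutVertex M0 s2)
    (hne : s1 ≠ s2) (hnadj : ¬ M0.Adj s1 s2) :
    TwoConnConv (M0 ⊔ fromEdgeSet {s(s1, s2)}) := by
  classical
  set G := M0 ⊔ fromEdgeSet {s(s1, s2)} with hGdef
  have hMG : M0 ≤ G := le_sup_left
  have hGc : G.Connected := hM0.mono hMG
  refine ⟨hGc, fun v => ?_⟩
  -- it suffices to show G minus v is preconnected
  refine aux_not_cut_s18 G hGc ?_
  have hmono : M0.induce {w | w ≠ v} ≤ G.induce {w | w ≠ v} := fun {x y} h => Or.inl h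
  by_cases hv : IsCutVertex M0 v
  case neg =>
    exact (aux_pre_of_not_cut M0 hM0 hv).mono hmono
  case pos =>
    have hs1v : s1 ≠ v := fun h => hs1c (h ▸ hv)
    have hs2v : s2 ≠ v := fun h => hs2c (h ▸ hv)
    -- membership of the τ's
    have htau : ∀ j, j + 1 < p → τ j ∈ (Y j).verts ∧ τ j ∈ (Y (j + 1)).verts := by
      intro j hj
      have : τ j ∈ (Y j).verts ∩ (Y (j + 1)).verts := by
        rw [hpath j hj]; exact rfl
      exact this
    -- the τ's are pairwise distinct
    have htne : ∀ m k, m < k → k + 1 < p → τ m ≠ τ k := by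
      intro m k hmk hk heq
      have hm1 : τ m ∈ (Y m).verts := (htau m (by omega)).1
      have hk1 : τ k ∈ (Y k).verts := (htau k hk).1
      have hk2 : τ k ∈ (Y (k + 1)).verts := (htau k hk).2
      rcases eq_or_lt_of_le (show m + 1 ≤ k by omega) with h | h
      · have : τ m ∈ (Y m).verts ∩ (Y (k + 1)).verts := ⟨hm1, heq ▸ hk2⟩
        rw [hdisj m (k + 1) (by omega) (by omega)] at this
        exact this
      · have : τ m ∈ (Y m).verts ∩ (Y k).verts := ⟨hm1, heq ▸ hk1⟩
        rw [hdisj m k h (by omega)] at this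
        exact this
    -- within a block, any two vertices distinct from v are connected avoiding v
    have breach : ∀ j < p, ∀ a ∈ (Y j).verts, ∀ b ∈ (Y j).verts, ∀ (ha : a ≠ v) (hb : b ≠ v),
        (M0.induce {w | w ≠ v}).Reachable ⟨a, ha⟩ ⟨b, hb⟩ := by
      intro j hj a haY b hbY ha hb
      obtain ⟨hYc, hYnc⟩ := hblocks j hj
      by_cases hvY : v ∈ (Y j).verts
      · have hpre : ((Y j).coe.induce {w | w ≠ (⟨v, hvY⟩ : (Y j).verts)}).Preconnected :=
          aux_pre_of_not_cut _ hYc.1 (hYc.2 ⟨v, hvY⟩)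
        let f : ((Y j).coe.induce {w | w ≠ (⟨v, hvY⟩ : (Y j).verts)}) →g (M0.induce {w | w ≠ v}) :=
          { toFun := fun x => ⟨x.1.1, fun h => x.2 (Subtype.ext h)⟩
            map_rel' := fun {x y} hxy => (Y j).adj_sub hxy }
        have hr := hpre ⟨⟨a, haY⟩, fun h => ha (congrArg Subtype.val h)⟩
          ⟨⟨b, hbY⟩, fun h => hb (congrArg Subtype.val h)⟩
        exact hr.map f
      · let f : (Y j).coe →g (M0.induce {w | w ≠ v}) :=
          { toFun := fun x => ⟨x.1, fun h => hvY (h ▸ x.2)⟩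
            map_rel' := fun {x y} hxy => (Y j).adj_sub hxy }
        have hr := hYc.1.preconnected ⟨a, haY⟩ ⟨b, hbY⟩
        exact hr.map f
    -- going up to s2
    have hup : ∀ n, ∀ j, j < p → p - 1 - j = n → (∀ k, j ≤ k → k + 1 < p → τ k ≠ v) →
        ∀ a, a ∈ (Y j).verts → ∀ (ha : a ≠ v),
        (M0.induce {w | w ≠ v}).Reachable ⟨a, ha⟩ ⟨s2, hs2v⟩ := by
      intro n
      induction n with
      | zero =>
        intro j hj hj0 _ a haY ha
        have hje : j = p - 1 := by omega
        subst hje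
        exact breach (p - 1) hj a haY s2 hs2 ha hs2v
      | succ n ih =>
        intro j hj hjn hτ a haY ha
        have hj1 : j + 1 < p := by omega
        have hτj : τ j ≠ v := hτ j le_rfl hj1
        have h1 := breach j hj a haY (τ j) (htau j hj1).1 ha hτj
        have h2 := ih (j + 1) hj1 (by omega) (fun k hk hk' => hτ k (by omega) hk')
          (τ j) (htau j hj1).2 hτj
        exact h1.trans h2
    -- going down to s1
    have hdown : ∀ j, j < p → (∀ k, k < j → τ k ≠ v) → ∀ a, a ∈ (Y j).verts → ∀ (ha : a ≠ v),
        (M0.induce {w | w ≠ v}).Reachable ⟨a, ha⟩ ⟨s1, hs1v⟩ := by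
      intro j
      induction j with
      | zero =>
        intro hj _ a haY ha
        exact breach 0 hj a haY s1 hs1 ha hs1v
      | succ j ih =>
        intro hj hτ a haY ha
        have hj1 : j + 1 < p := hj
        have hτj : τ j ≠ v := hτ j (by omega)
        have h1 := breach (j + 1) hj a haY (τ j) (htau j hj1).2 ha hτj
        have h2 := ih (by omega) (fun k hk => hτ k (by omega)) (τ j) (htau j hj1).1 hτj
        exact h1.trans h2
    -- every vertex lies in some block
    have hcov : ∀ w : V, ∃ j, j < p ∧ w ∈ (Y j).verts := by
      intro w
      obtain ⟨u, hu⟩ : ∃ u, M0.Adj w u := by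
        obtain ⟨z, hz⟩ : ∃ z, z ≠ w := by
          rcases eq_or_ne w s1 with rfl | h
          · exact ⟨s2, hne.symm⟩
          · exact ⟨s1, fun hh => h hh.symm⟩
        obtain ⟨wlk⟩ := hM0.preconnected w z
        cases wlk with
        | nil => exact absurd rfl hz
        | cons h q => exact ⟨_, h⟩
      have hH0 : TwoConnConv (M0.subgraphOfAdj hu).coe := by
        have hcc : (M0.subgraphOfAdj hu).coe.Connected :=
          (SimpleGraph.Subgraph.subgraphOfAdj_connected hu).coe
        refine ⟨hcc, fun x => ?_⟩
        refine aux_not_cut_of_subsingleton _ hcc ?_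
        constructor
        obtain ⟨xv, hxm⟩ := x
        rintro ⟨⟨y, hy⟩, hy2⟩ ⟨⟨z, hz⟩, hz2⟩
        have hy2' : y ≠ xv := fun h => hy2 (Subtype.ext h)
        have hz2' : z ≠ xv := fun h => hz2 (Subtype.ext h)
        have hx : xv = w ∨ xv = u := by
          simpa [SimpleGraph.subgraphOfAdj_verts] using hxm
        simp only [SimpleGraph.subgraphOfAdj_verts, Set.mem_insert_iff,
          Set.mem_singleton_iff] at hy hz
        apply Subtype.ext
        apply Subtype.ext
        show y = z
        rcases hy with rfl | rfl <;> rcases hz with rfl | rfl <;>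
          rcases hx with rfl | rfl <;>
          first
            | rfl
            | exact absurd rfl hy2'
            | exact absurd rfl hz2'
      haveI := aux_finite_subgraph M0
      let S : Set M0.Subgraph := {H | M0.subgraphOfAdj hu ≤ H ∧ TwoConnConv H.coe}
      obtain ⟨H, hHS, hmax⟩ := Set.Finite.exists_maximalFor id S (Set.toFinite S)
        ⟨M0.subgraphOfAdj hu, le_refl _, hH0⟩
      have hblk : IsBlock M0 H :=
        ⟨hHS.2, fun H' hle h2 => le_antisymm (hmax ⟨le_trans hHS.1 hle, h2⟩ hle) hle⟩
      obtain ⟨j, hj, hHY⟩ := hall H hblk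
      refine ⟨j, hj, ?_⟩
      rw [← hHY]
      exact (Subgraph.verts_mono hHS.1) (by simp)
    -- assemble
    have key : ∀ a, ∀ (ha : a ≠ v),
        (M0.induce {w | w ≠ v}).Reachable ⟨a, ha⟩ ⟨s1, hs1v⟩ ∨
        (M0.induce {w | w ≠ v}).Reachable ⟨a, ha⟩ ⟨s2, hs2v⟩ := by
      intro a ha
      obtain ⟨j, hj, haY⟩ := hcov a
      by_cases hτv : ∃ k, k + 1 < p ∧ τ k = v
      · obtain ⟨k0, hk0, hk0v⟩ := hτv
        by_cases hjk : j ≤ k0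
        · exact Or.inl (hdown j hj
            (fun k hk he => htne k k0 (by omega) hk0 (he.trans hk0v.symm)) a haY ha)
        · exact Or.inr (hup (p - 1 - j) j hj rfl
            (fun k hk hk' he => htne k0 k (by omega) hk' (hk0v.trans he.symm)) a haY ha)
      · push_neg at hτv
        exact Or.inr (hup (p - 1 - j) j hj rfl (fun k _ hk => hτv k hk) a haY ha)
    have hD12 : (G.induce {w | w ≠ v}).Reachable ⟨s1, hs1v⟩ ⟨s2, hs2v⟩ := by
      refine Adj.reachable ?_
      show G.Adj s1 s2
      exact Or.inr (by simp [hne])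
    intro x y
    have hx := (key x.1 x.2).imp (Reachable.mono hmono) (Reachable.mono hmono)
    have hy := (key y.1 y.2).imp (Reachable.mono hmono) (Reachable.mono hmono)
    rcases hx with hx | hx <;> rcases hy with hy | hy
    · exact hx.trans hy.symm
    · exact hx.trans (hD12.trans hy.symm)
    · exact hx.trans (hD12.symm.trans hy.symm)
    · exact hx.trans hy.symm
end
end
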